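/- arXiv:2301.06209 — 5 statements merged into one kernel-verified Lean document; each statement's English description precedes it below -/
import Mathlib

section
/- Let K_1, …, K_k be finite Kripke structures over a common finite set AP of atomic propositions, and let φ = Q_1 π_1. … Q_k π_k. ψ be a HyperLTL sentence, where each Q_j ∈ {∃, ∀} and ψ is a quantifier-free LTL body over atoms a_{π_j} (a ∈ AP, 1 ≤ j ≤ k). Let C_i = LassoTraces(K_i) for each i. Then ⟨Traces(K_1), …, Traces(K_k)⟩ ⊨ φ if and only if ⟨C_1, …, C_k⟩ ⊨ φ. -/
/-- A Kripke structure over state type `S` and atomic propositions `α`: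
a nonempty set of initial states, a total transition relation, and a labeling. -/
structure Kripke (S : Type) (α : Type) where
  init : Set S
  init_nonempty : init.Nonempty
  delta : S → S → Prop
  total : ∀ s, ∃ s', delta s s'
  L : S → Set α

/-- A path of a Kripke structure. -/
def Kripke.IsPath {S α : Type} (K : Kripke S α) (p : ℕ → S) : Prop :=
  p 0 ∈ K.init ∧ ∀ i, K.delta (p i) (p (i + 1))

/-- The set of traces of a Kripke structure. -/
def Kripke.Traces {S α : Type} (K : Kripke S α) : Set (ℕ → Set α) :=
  {t | ∃ p, K.IsPath p ∧ ∀ i, t i = K.L (p i)}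

/-- Index of the state visited at time `i` by the infinite unrolling of a lasso path
`s 0, …, s ℓ` with loopback index `n` (follow `s 0 … s ℓ`, then repeat `s n … s ℓ`). -/
def lassoIdx (n ℓ i : ℕ) : ℕ :=
  if i ≤ ℓ then i else n + (i - n) % (ℓ + 1 - n)

/-- The set of lasso traces of a Kripke structure: traces of infinite unrollings of
lasso paths `s 0, …, s ℓ` with `(s ℓ, s n) ∈ δ` for some `0 ≤ n < ℓ`. -/
def Kripke.LassoTraces {S α : Type} (K : Kripke S α) : Set (ℕ → Set α) :=
  {t | ∃ (s : ℕ → S) (n ℓ : ℕ), n < ℓ ∧ s 0 ∈ K.init ∧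
    (∀ i, i < ℓ → K.delta (s i) (s (i + 1))) ∧ K.delta (s ℓ) (s n) ∧
    ∀ i, t i = K.L (s (lassoIdx n ℓ i))}

/-- Quantifier-free LTL formulas over atoms of type `α`. -/
inductive LTL (α : Type) where
  | tt : LTL α
  | atom (a : α) : LTL α
  | neg (ψ : LTL α) : LTL α
  | disj (ψ₁ ψ₂ : LTL α) : LTL α
  | conj (ψ₁ ψ₂ : LTL α) : LTL α
  | next (ψ : LTL α) : LTL α
  | untl (ψ₁ ψ₂ : LTL α) : LTL α
  | release (ψ₁ ψ₂ : LTL α) : LTL α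

/-- Satisfaction of an LTL formula over the trace `t` at position `i`. -/
def LTL.Sat {α : Type} (t : ℕ → Set α) : ℕ → LTL α → Prop
  | _, .tt => True
  | i, .atom a => a ∈ t i
  | i, .neg ψ => ¬ LTL.Sat t i ψ
  | i, .disj ψ₁ ψ₂ => LTL.Sat t i ψ₁ ∨ LTL.Sat t i ψ₂
  | i, .conj ψ₁ ψ₂ => LTL.Sat t i ψ₁ ∧ LTL.Sat t i ψ₂
  | i, .next ψ => LTL.Sat t (i + 1) ψ
  | i, .untl ψ₁ ψ₂ => ∃ j, i ≤ j ∧ LTL.Sat t j ψ₂ ∧ ∀ m, i ≤ m → m < j → LTL.Sat t m ψ₁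
  | i, .release ψ₁ ψ₂ => (∀ j, i ≤ j → LTL.Sat t j ψ₂) ∨
      (∃ j, i ≤ j ∧ LTL.Sat t j ψ₁ ∧ ∀ m, i ≤ m → m ≤ j → LTL.Sat t m ψ₂)

/-- A quantifier: existential or universal. -/
inductive Quant where
  | ex : Quant
  | all : Quant

/-- Satisfaction of a quantifier prefix `Q` over trace sets `T` with matrix `P`:
`Q 0` quantifies the first trace over `T 0`, etc. -/
def HyperSat {α : Type} : ∀ (k : ℕ), (Fin k → Quant) → (Fin k → Set (ℕ → Set α)) →
    ((Fin k → (ℕ → Set α)) → Prop) → Prop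
  | 0, _, _, P => P (fun j => j.elim0)
  | k + 1, Q, T, P =>
    match Q 0 with
    | .ex => ∃ t ∈ T 0, HyperSat k (fun j => Q j.succ) (fun j => T j.succ)
        (fun ts => P (Fin.cons t ts))
    | .all => ∀ t ∈ T 0, HyperSat k (fun j => Q j.succ) (fun j => T j.succ)
        (fun ts => P (Fin.cons t ts))


set_option linter.dupNamespace false
namespace HyperAux

open Classical


variable {β δ M C : Type}

/-- The segment `w i, w (i+1), …, w (j-1)` of an infinite word. -/
def seg (w : ℕ → β) (i j : ℕ) : List β := (List.range (j - i)).map (fun r => w (i + r))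

@[simp] lemma seg_self (w : ℕ → β) (i : ℕ) : seg w i i = [] := by simp [seg]

lemma seg_len (w : ℕ → β) (i j : ℕ) : (seg w i j).length = j - i := by simp [seg]

lemma seg_cons (w : ℕ → β) {i j : ℕ} (h : i < j) :
    seg w i j = w i :: seg w (i+1) j := by
  have h1 : j - i = (j - (i+1)) + 1 := by omega
  simp only [seg, h1, List.range_succ_eq_map, List.map_cons, List.map_map]
  refine congrArg₂ _ (by simp) ?_
  apply List.map_congr_left
  intro r _
  simp only [Function.comp_apply]
  congr 1
  omega

lemma seg_append (w : ℕ → β) {i j k : ℕ} (h1 : i ≤ j) (h2 : j ≤ k) :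
    seg w i j ++ seg w j k = seg w i k := by
  have h3 : k - i = (j - i) + (k - j) := by omega
  simp only [seg, h3, List.range_add, List.map_append, List.map_map]
  congr 1
  apply List.map_congr_left
  intro r _
  simp only [Function.comp_apply]
  congr 1
  omega

lemma seg_congr {w w' : ℕ → β} {i j : ℕ} (h : ∀ m, i ≤ m → m < j → w m = w' m) :
    seg w i j = seg w' i j := by
  apply List.map_congr_left
  intro r hr
  simp only [List.mem_range] at hr
  exact h _ (Nat.le_add_right _ _) (by omega)

lemma seg_map (g : β → δ) (w : ℕ → β) (i j : ℕ) :
    seg (fun m => g (w m)) i j = (seg w i j).map g := by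
  simp [seg, List.map_map]




variable {β δ M C : Type}

/-- `w` admits a strong `(s,e)`-factorization with respect to the type map `h`. -/
def Fact (h : List β → M) (w : ℕ → β) (s e : M) : Prop :=
  ∃ I : ℕ → ℕ, StrictMono I ∧ h (seg w 0 (I 0)) = s ∧
    ∀ r r', r < r' → h (seg w (I r) (I r')) = e

/-- A predicate on infinite words is *good* if it is recognized by a finite
type map: words with a common strong factorization type are not distinguished. -/
def GoodW (P : (ℕ → β) → Prop) : Prop :=
  ∃ (M : Type) (_ : Finite M) (mul : M → M → M) (h : List β → M),
    (∀ l₁ l₂ : List β, h (l₁ ++ l₂) = mul (h l₁) (h l₂)) ∧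
    ∀ w w' s e, Fact h w s e → Fact h w' s e → (P w ↔ P w')

lemma GoodW.congr {P P' : (ℕ → β) → Prop} (h : GoodW P) (hpp : ∀ w, P w ↔ P' w) :
    GoodW P' := by
  obtain ⟨M, fM, mul, hh, hom, sat⟩ := h
  exact ⟨M, fM, mul, hh, hom, fun w w' s e f1 f2 => by
    rw [← hpp w, ← hpp w']; exact sat w w' s e f1 f2⟩

lemma GoodW.not {P : (ℕ → β) → Prop} (h : GoodW P) : GoodW (fun w => ¬ P w) := by
  obtain ⟨M, fM, mul, hh, hom, sat⟩ := h
  exact ⟨M, fM, mul, hh, hom, fun w w' s e f1 f2 => by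
    exact not_congr (sat w w' s e f1 f2)⟩

lemma GoodW.comap (g : β → δ) {P : (ℕ → δ) → Prop} (h : GoodW P) :
    GoodW (fun w : ℕ → β => P (fun i => g (w i))) := by
  obtain ⟨M, fM, mul, hh, hom, sat⟩ := h
  refine ⟨M, fM, mul, fun l => hh (l.map g), fun l₁ l₂ => by
    show hh ((l₁ ++ l₂).map g) = _
    rw [List.map_append]; exact hom _ _, fun w w' s e f1 f2 => ?_⟩
  have conv : ∀ (w : ℕ → β) s e, Fact (fun l => hh (l.map g)) w s e →
      Fact hh (fun i => g (w i)) s e := by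
    rintro w s e ⟨I, hI, h0, hb⟩
    exact ⟨I, hI, by rw [seg_map]; exact h0, fun r r' hr => by
      rw [seg_map]; exact hb r r' hr⟩
  exact sat _ _ s e (conv w s e f1) (conv w' s e f2)

lemma fact_of_consecutive {h : List β → M} {mul : M → M → M}
    (hom : ∀ l₁ l₂ : List β, h (l₁ ++ l₂) = mul (h l₁) (h l₂))
    {w : ℕ → β} {I : ℕ → ℕ} (hI : StrictMono I) {s e : M}
    (h0 : h (seg w 0 (I 0)) = s) (hb : ∀ r, h (seg w (I r) (I (r+1))) = e)
    (he : mul e e = e) : Fact h w s e := by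
  refine ⟨I, hI, h0, ?_⟩
  intro r r' hr
  induction r' with
  | zero => omega
  | succ n ih =>
    rcases Nat.lt_or_ge r n with hlt | hge
    · have : h (seg w (I r) (I (n+1))) = mul (h (seg w (I r) (I n))) (h (seg w (I n) (I (n+1)))) := by
        rw [← hom, seg_append w (le_of_lt (hI hlt)) (le_of_lt (hI (Nat.lt_succ_self n)))]
      rw [this, ih hlt, hb n, he]
    · have : r = n := by omega
      subst this; exact hb r

/-- Extract a strictly monotone enumeration from an infinite set of naturals. -/
lemma exists_strictMono_into {S : Set ℕ} (hS : S.Infinite) :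
    ∃ g : ℕ → ℕ, StrictMono g ∧ ∀ n, g n ∈ S := by
  have hgt : ∀ a : ℕ, ∃ b ∈ S, a < b := fun a => hS.exists_gt a
  choose f hfS hfgt using hgt
  refine ⟨fun n => Nat.rec (f 0) (fun _ x => f x) n, strictMono_nat_of_lt_succ ?_, ?_⟩
  · intro n; exact hfgt _
  · intro n; cases n <;> exact hfS _

/-- Infinite pigeonhole. -/
lemma exists_infinite_fiber [Finite C] (f : ℕ → C) {S : Set ℕ} (hS : S.Infinite) :
    ∃ c, {n ∈ S | f n = c}.Infinite := by
  by_contra hc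
  push_neg at hc
  have : S ⊆ ⋃ c : C, {n ∈ S | f n = c} := by
    intro n hn; exact Set.mem_iUnion.2 ⟨f n, hn, rfl⟩
  exact hS ((Set.finite_iUnion hc).subset this)

/-- Infinite Ramsey theorem for pairs with finitely many colors. -/
theorem ramsey_pairs [Finite C] (f : ℕ → ℕ → C) :
    ∃ (I : ℕ → ℕ) (c : C), StrictMono I ∧ ∀ r r', r < r' → f (I r) (I r') = c := by
  -- iteratively choose elements and thin out to a monochromatic "cone"
  classical
  have step : ∀ p : {q : ℕ × Set ℕ // q.2.Infinite},
      ∃ p' : {q : ℕ × Set ℕ // q.2.Infinite},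
        p'.1.1 ∈ p.1.2 ∧ p.1.1 < p'.1.1 ∧ (∃ c, ∀ x ∈ p'.1.2, f p'.1.1 x = c) ∧
          p'.1.2 ⊆ p.1.2 ∧ ∀ x ∈ p'.1.2, p'.1.1 < x := by
    rintro ⟨⟨a, S⟩, hS⟩
    obtain ⟨b, hbS, hab⟩ := hS.exists_gt a
    obtain ⟨c, hc⟩ := exists_infinite_fiber (f b) (hS.diff (Set.finite_Iic b))
    refine ⟨⟨⟨b, {n ∈ S \ Set.Iic b | f b n = c}⟩, hc⟩, hbS, hab, ⟨c, ?_⟩, ?_, ?_⟩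
    · rintro x ⟨_, hx⟩; exact hx
    · rintro x ⟨⟨hx, _⟩, _⟩; exact hx
    · rintro x ⟨⟨_, hx⟩, _⟩; simpa using hx
  choose nxt hmem hlt hcol hsub hgt using step
  let seqv : ℕ → {q : ℕ × Set ℕ // q.2.Infinite} :=
    fun n => Nat.rec ⟨⟨0, Set.univ⟩, Set.infinite_univ⟩ (fun _ p => nxt p) n
  set a : ℕ → ℕ := fun n => (seqv n).1.1 with ha
  choose col hcolspec using hcol
  set cc : ℕ → C := fun n => col (seqv n) with hcc
  -- a is strictly monotone
  have hamono : StrictMono a := strictMono_nat_of_lt_succ (fun n => hlt (seqv n))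
  -- sets are nested along the sequence, and membership propagates
  have hmem2 : ∀ n m, n < m → a m ∈ (seqv n).1.2 ∧ ∀ x ∈ (seqv m).1.2, x ∈ (seqv n).1.2 := by
    intro n m hnm
    induction m with
    | zero => omega
    | succ p ih =>
      rcases Nat.lt_or_ge n p with h1 | h2
      · obtain ⟨ihm, ihs⟩ := ih h1
        exact ⟨ihs _ (hmem (seqv p)), fun x hx => ihs _ (hsub (seqv p) hx)⟩
      · have : n = p := by omega
        subst this
        exact ⟨hmem (seqv n), fun x hx => hsub (seqv n) hx⟩
  have key : ∀ n m, n + 1 < m → f (a (n+1)) (a m) = cc n := by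
    intro n m hnm
    have hx : a m ∈ (seqv (n+1)).1.2 := (hmem2 (n+1) m hnm).1
    exact hcolspec (seqv n) _ hx
  obtain ⟨c, hcinf⟩ := exists_infinite_fiber cc Set.infinite_univ
  obtain ⟨g, hg, hgmem⟩ := exists_strictMono_into hcinf
  refine ⟨fun r => a (g r + 1), c, ?_, ?_⟩
  · intro r r' hr
    have hlt2 : g r + 1 < g r' + 1 := by have := hg hr; omega
    exact hamono hlt2
  intro r r' hr
  have hgc : cc (g r) = c := (hgmem r).2
  rw [← hgc]
  exact key (g r) (g r' + 1) (by have := hg hr; omega)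


variable {γ : Type}

/-- The list of subformulas of an LTL formula (including itself). -/
def subf : LTL γ → List (LTL γ)
  | .tt => [.tt]
  | .atom a => [.atom a]
  | .neg φ => .neg φ :: subf φ
  | .disj φ₁ φ₂ => .disj φ₁ φ₂ :: (subf φ₁ ++ subf φ₂)
  | .conj φ₁ φ₂ => .conj φ₁ φ₂ :: (subf φ₁ ++ subf φ₂)
  | .next φ => .next φ :: subf φ
  | .untl φ₁ φ₂ => .untl φ₁ φ₂ :: (subf φ₁ ++ subf φ₂)
  | .release φ₁ φ₂ => .release φ₁ φ₂ :: (subf φ₁ ++ subf φ₂)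

lemma mem_subf_self (φ : LTL γ) : φ ∈ subf φ := by
  cases φ <;> simp [subf]

lemma subf_closed : ∀ (ψ φ : LTL γ), φ ∈ subf ψ → ∀ χ ∈ subf φ, χ ∈ subf ψ := by
  intro ψ
  induction ψ with
  | tt =>
    intro φ h χ hχ
    simp only [subf, List.mem_singleton] at h
    subst h; exact hχ
  | atom a =>
    intro φ h χ hχ
    simp only [subf, List.mem_singleton] at h
    subst h; exact hχ
  | neg ψ ih =>
    intro φ h χ hχ
    simp only [subf, List.mem_cons] at h ⊢
    rcases h with h | h
    · subst h; simpa [subf] using hχ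
    · exact Or.inr (ih φ h χ hχ)
  | next ψ ih =>
    intro φ h χ hχ
    simp only [subf, List.mem_cons] at h ⊢
    rcases h with h | h
    · subst h; simpa [subf] using hχ
    · exact Or.inr (ih φ h χ hχ)
  | disj ψ₁ ψ₂ ih₁ ih₂ =>
    intro φ h χ hχ
    simp only [subf, List.mem_cons, List.mem_append] at h ⊢
    rcases h with h | h | h
    · subst h; simpa [subf] using hχ
    · exact Or.inr (Or.inl (ih₁ φ h χ hχ))
    · exact Or.inr (Or.inr (ih₂ φ h χ hχ))
  | conj ψ₁ ψ₂ ih₁ ih₂ =>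
    intro φ h χ hχ
    simp only [subf, List.mem_cons, List.mem_append] at h ⊢
    rcases h with h | h | h
    · subst h; simpa [subf] using hχ
    · exact Or.inr (Or.inl (ih₁ φ h χ hχ))
    · exact Or.inr (Or.inr (ih₂ φ h χ hχ))
  | untl ψ₁ ψ₂ ih₁ ih₂ =>
    intro φ h χ hχ
    simp only [subf, List.mem_cons, List.mem_append] at h ⊢
    rcases h with h | h | h
    · subst h; simpa [subf] using hχ
    · exact Or.inr (Or.inl (ih₁ φ h χ hχ))
    · exact Or.inr (Or.inr (ih₂ φ h χ hχ))
  | release ψ₁ ψ₂ ih₁ ih₂ =>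
    intro φ h χ hχ
    simp only [subf, List.mem_cons, List.mem_append] at h ⊢
    rcases h with h | h | h
    · subst h; simpa [subf] using hχ
    · exact Or.inr (Or.inl (ih₁ φ h χ hχ))
    · exact Or.inr (Or.inr (ih₂ φ h χ hχ))

/-- One-step "local" semantics of LTL given the truth values `T` at the next instant. -/
def stepF (a : Set γ) (T : LTL γ → Prop) : LTL γ → Prop
  | .tt => True
  | .atom b => b ∈ a
  | .neg φ => ¬ stepF a T φ
  | .disj φ₁ φ₂ => stepF a T φ₁ ∨ stepF a T φ₂
  | .conj φ₁ φ₂ => stepF a T φ₁ ∧ stepF a T φ₂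
  | .next φ => T φ
  | .untl φ₁ φ₂ => stepF a T φ₂ ∨ (stepF a T φ₁ ∧ T (.untl φ₁ φ₂))
  | .release φ₁ φ₂ => stepF a T φ₂ ∧ (stepF a T φ₁ ∨ T (.release φ₁ φ₂))

/-- LTL expansion laws. -/
lemma sat_iff_step (w : ℕ → Set γ) : ∀ (φ : LTL γ) (i : ℕ),
    LTL.Sat w i φ ↔ stepF (w i) (fun χ => LTL.Sat w (i+1) χ) φ := by
  intro φ
  induction φ with
  | tt => intro i; simp [LTL.Sat, stepF]
  | atom a => intro i; simp [LTL.Sat, stepF]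
  | neg φ ih => intro i; exact not_congr (ih i)
  | disj φ₁ φ₂ ih₁ ih₂ => intro i; exact or_congr (ih₁ i) (ih₂ i)
  | conj φ₁ φ₂ ih₁ ih₂ => intro i; exact and_congr (ih₁ i) (ih₂ i)
  | next φ ih => intro i; simp [LTL.Sat, stepF]
  | untl φ₁ φ₂ ih₁ ih₂ =>
    intro i
    show LTL.Sat w i (.untl φ₁ φ₂) ↔
      stepF (w i) _ φ₂ ∨ (stepF (w i) _ φ₁ ∧ LTL.Sat w (i+1) (.untl φ₁ φ₂))
    rw [← ih₁ i, ← ih₂ i]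
    constructor
    · rintro ⟨j, hij, h2, h1⟩
      rcases Nat.eq_or_lt_of_le hij with he | hlt
      · subst he; exact Or.inl h2
      · exact Or.inr ⟨h1 i le_rfl hlt,
          ⟨j, by omega, h2, fun m hm1 hm2 => h1 m (by omega) hm2⟩⟩
    · rintro (h2 | ⟨h1, j, hij, h2, hall⟩)
      · exact ⟨i, le_rfl, h2, by omega⟩
      · refine ⟨j, by omega, h2, fun m hm1 hm2 => ?_⟩
        rcases Nat.eq_or_lt_of_le hm1 with he | hlt
        · subst he; exact h1
        · exact hall m hlt hm2
  | release φ₁ φ₂ ih₁ ih₂ =>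
    intro i
    show LTL.Sat w i (.release φ₁ φ₂) ↔
      stepF (w i) _ φ₂ ∧ (stepF (w i) _ φ₁ ∨ LTL.Sat w (i+1) (.release φ₁ φ₂))
    rw [← ih₁ i, ← ih₂ i]
    constructor
    · rintro (hall | ⟨j, hij, h1, h2⟩)
      · refine ⟨hall i le_rfl, Or.inr (Or.inl fun j hj => hall j (by omega))⟩
      · refine ⟨h2 i le_rfl hij, ?_⟩
        rcases Nat.eq_or_lt_of_le hij with he | hlt
        · subst he; exact Or.inl h1
        · exact Or.inr (Or.inr ⟨j, by omega, h1, fun m hm1 hm2 => h2 m (by omega) hm2⟩)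
    · rintro ⟨hφ₂, h1 | hR⟩
      · exact Or.inr ⟨i, le_rfl, h1, fun m hm1 hm2 => by
          have : m = i := by omega
          subst this; exact hφ₂⟩
      · rcases hR with hall | ⟨j, hij, h1, h2⟩
        · refine Or.inl fun j hj => ?_
          rcases Nat.eq_or_lt_of_le hj with he | hlt
          · subst he; exact hφ₂
          · exact hall j (by omega)
        · refine Or.inr ⟨j, by omega, h1, fun m hm1 hm2 => ?_⟩
          rcases Nat.eq_or_lt_of_le hm1 with he | hlt
          · subst he; exact hφ₂
          · exact h2 m (by omega) hm2

lemma stepF_congr (a : Set γ) {T T' : LTL γ → Prop} : ∀ (φ : LTL γ),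
    (∀ χ ∈ subf φ, (T χ ↔ T' χ)) → (stepF a T φ ↔ stepF a T' φ) := by
  intro φ
  induction φ with
  | tt => intro _; simp [stepF]
  | atom b => intro _; simp [stepF]
  | neg φ ih =>
    intro h
    exact not_congr (ih fun χ hχ => h χ (by simp [subf, hχ]))
  | disj φ₁ φ₂ ih₁ ih₂ =>
    intro h
    exact or_congr (ih₁ fun χ hχ => h χ (by simp [subf, hχ]))
      (ih₂ fun χ hχ => h χ (by simp [subf, hχ]))
  | conj φ₁ φ₂ ih₁ ih₂ =>
    intro h
    exact and_congr (ih₁ fun χ hχ => h χ (by simp [subf, hχ]))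
      (ih₂ fun χ hχ => h χ (by simp [subf, hχ]))
  | next φ ih =>
    intro h
    exact h φ (by simp [subf, mem_subf_self])
  | untl φ₁ φ₂ ih₁ ih₂ =>
    intro h
    exact or_congr (ih₂ fun χ hχ => h χ (by simp [subf, hχ]))
      (and_congr (ih₁ fun χ hχ => h χ (by simp [subf, hχ]))
        (h _ (mem_subf_self _)))
  | release φ₁ φ₂ ih₁ ih₂ =>
    intro h
    exact and_congr (ih₂ fun χ hχ => h χ (by simp [subf, hχ]))
      (or_congr (ih₁ fun χ hχ => h χ (by simp [subf, hχ]))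
        (h _ (mem_subf_self _)))

/-- Truth values after reading a finite word, given the truth values `T` at its end. -/
def runF : List (Set γ) → (LTL γ → Prop) → (LTL γ → Prop)
  | [], T => T
  | a :: l, T => stepF a (runF l T)

/-- `φ` holds at some position strictly inside the finite word. -/
def fulF : List (Set γ) → (LTL γ → Prop) → LTL γ → Prop
  | [], _, _ => False
  | a :: l, T, χ => stepF a (runF l T) χ ∨ fulF l T χ

/-- `φ` fails at some position strictly inside the finite word. -/
def brkF : List (Set γ) → (LTL γ → Prop) → LTL γ → Prop
  | [], _, _ => False
  | a :: l, T, χ => ¬ stepF a (runF l T) χ ∨ brkF l T χ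

lemma runF_append (l₁ l₂ : List (Set γ)) (T : LTL γ → Prop) :
    runF (l₁ ++ l₂) T = runF l₁ (runF l₂ T) := by
  induction l₁ with
  | nil => rfl
  | cons a l ih =>
    show stepF a (runF (l ++ l₂) T) = stepF a (runF l (runF l₂ T))
    rw [ih]

lemma fulF_append (l₁ l₂ : List (Set γ)) (T : LTL γ → Prop) (χ : LTL γ) :
    fulF (l₁ ++ l₂) T χ ↔ fulF l₁ (runF l₂ T) χ ∨ fulF l₂ T χ := by
  induction l₁ with
  | nil => simp [fulF]
  | cons a l ih =>
    show stepF a (runF (l ++ l₂) T) χ ∨ fulF (l ++ l₂) T χ ↔ _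
    rw [runF_append, ih]
    show _ ↔ (stepF a (runF l (runF l₂ T)) χ ∨ fulF l (runF l₂ T) χ) ∨ fulF l₂ T χ
    tauto

lemma brkF_append (l₁ l₂ : List (Set γ)) (T : LTL γ → Prop) (χ : LTL γ) :
    brkF (l₁ ++ l₂) T χ ↔ brkF l₁ (runF l₂ T) χ ∨ brkF l₂ T χ := by
  induction l₁ with
  | nil => simp [brkF]
  | cons a l ih =>
    show ¬ stepF a (runF (l ++ l₂) T) χ ∨ brkF (l ++ l₂) T χ ↔ _
    rw [runF_append, ih]
    show _ ↔ (¬ stepF a (runF l (runF l₂ T)) χ ∨ brkF l (runF l₂ T) χ) ∨ brkF l₂ T χ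
    tauto

variable {ψ : LTL γ}

lemma runF_congr {T T' : LTL γ → Prop} (hag : ∀ χ ∈ subf ψ, (T χ ↔ T' χ)) :
    ∀ l, ∀ χ ∈ subf ψ, (runF l T χ ↔ runF l T' χ) := by
  intro l
  induction l with
  | nil => exact hag
  | cons a l ih =>
    intro χ hχ
    exact stepF_congr a χ (fun χ' hχ' => ih χ' (subf_closed ψ χ hχ χ' hχ'))

lemma fulF_congr {T T' : LTL γ → Prop} (hag : ∀ χ ∈ subf ψ, (T χ ↔ T' χ)) :
    ∀ l, ∀ χ ∈ subf ψ, (fulF l T χ ↔ fulF l T' χ) := by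
  intro l
  induction l with
  | nil => intro χ _; simp [fulF]
  | cons a l ih =>
    intro χ hχ
    show stepF a (runF l T) χ ∨ fulF l T χ ↔ stepF a (runF l T') χ ∨ fulF l T' χ
    exact or_congr
      (stepF_congr a χ (fun χ' hχ' =>
        runF_congr hag l χ' (subf_closed ψ χ hχ χ' hχ')))
      (ih χ hχ)

lemma brkF_congr {T T' : LTL γ → Prop} (hag : ∀ χ ∈ subf ψ, (T χ ↔ T' χ)) :
    ∀ l, ∀ χ ∈ subf ψ, (brkF l T χ ↔ brkF l T' χ) := by
  intro l
  induction l with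
  | nil => intro χ _; simp [brkF]
  | cons a l ih =>
    intro χ hχ
    show ¬ stepF a (runF l T) χ ∨ brkF l T χ ↔ ¬ stepF a (runF l T') χ ∨ brkF l T' χ
    exact or_congr
      (not_congr (stepF_congr a χ (fun χ' hχ' =>
        runF_congr hag l χ' (subf_closed ψ χ hχ χ' hχ'))))
      (ih χ hχ)

lemma runF_seg (w : ℕ → Set γ) : ∀ (d i : ℕ) (φ : LTL γ),
    runF (seg w i (i + d)) (fun χ => LTL.Sat w (i + d) χ) φ ↔ LTL.Sat w i φ := by
  intro d
  induction d with
  | zero => intro i φ; simp [runF]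
  | succ d ih =>
    intro i φ
    rw [seg_cons w (by omega : i < i + (d+1))]
    show stepF (w i) (runF (seg w (i+1) (i + (d+1))) _) φ ↔ _
    have heq : i + (d + 1) = (i + 1) + d := by omega
    rw [sat_iff_step w φ i]
    apply stepF_congr
    intro χ _
    rw [heq]
    exact ih (i+1) χ

lemma fulF_seg_of (w : ℕ → Set γ) (T : LTL γ → Prop) (φ : LTL γ) :
    ∀ (d i j m : ℕ), i ≤ m → m < j → m - i = d →
    stepF (w m) (runF (seg w (m+1) j) T) φ → fulF (seg w i j) T φ := by
  intro d
  induction d with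
  | zero =>
    intro i j m h1 h2 h3 hstep
    have : i = m := by omega
    subst this
    rw [seg_cons w h2]
    exact Or.inl hstep
  | succ d ih =>
    intro i j m h1 h2 h3 hstep
    rw [seg_cons w (by omega : i < j)]
    exact Or.inr (ih (i+1) j m (by omega) h2 (by omega) hstep)

lemma fulF_seg_to (w : ℕ → Set γ) (T : LTL γ → Prop) (φ : LTL γ) :
    ∀ (d i j : ℕ), j - i = d → fulF (seg w i j) T φ →
    ∃ m, i ≤ m ∧ m < j ∧ stepF (w m) (runF (seg w (m+1) j) T) φ := by
  intro d
  induction d with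
  | zero =>
    intro i j h1 h2
    have : j - i = 0 := h1
    have : seg w i j = [] := by simp [seg, this]
    rw [this] at h2
    exact absurd h2 (by simp [fulF])
  | succ d ih =>
    intro i j h1 h2
    rw [seg_cons w (by omega : i < j)] at h2
    rcases h2 with h | h
    · exact ⟨i, le_rfl, by omega, h⟩
    · obtain ⟨m, hm1, hm2, hm3⟩ := ih (i+1) j (by omega) h
      exact ⟨m, by omega, hm2, hm3⟩

lemma brkF_seg_of (w : ℕ → Set γ) (T : LTL γ → Prop) (φ : LTL γ) :
    ∀ (d i j m : ℕ), i ≤ m → m < j → m - i = d →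
    ¬ stepF (w m) (runF (seg w (m+1) j) T) φ → brkF (seg w i j) T φ := by
  intro d
  induction d with
  | zero =>
    intro i j m h1 h2 h3 hstep
    have : i = m := by omega
    subst this
    rw [seg_cons w h2]
    exact Or.inl hstep
  | succ d ih =>
    intro i j m h1 h2 h3 hstep
    rw [seg_cons w (by omega : i < j)]
    exact Or.inr (ih (i+1) j m (by omega) h2 (by omega) hstep)

lemma brkF_seg_to (w : ℕ → Set γ) (T : LTL γ → Prop) (φ : LTL γ) :
    ∀ (d i j : ℕ), j - i = d → brkF (seg w i j) T φ →
    ∃ m, i ≤ m ∧ m < j ∧ ¬ stepF (w m) (runF (seg w (m+1) j) T) φ := by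
  intro d
  induction d with
  | zero =>
    intro i j h1 h2
    have : seg w i j = [] := by simp [seg, h1]
    rw [this] at h2
    exact absurd h2 (by simp [brkF])
  | succ d ih =>
    intro i j h1 h2
    rw [seg_cons w (by omega : i < j)] at h2
    rcases h2 with h | h
    · exact ⟨i, le_rfl, by omega, h⟩
    · obtain ⟨m, hm1, hm2, hm3⟩ := ih (i+1) j (by omega) h
      exact ⟨m, by omega, hm2, hm3⟩


variable {γ : Type}

lemma untl_mem_left {ψ φ₁ φ₂ : LTL γ} (h : (.untl φ₁ φ₂) ∈ subf ψ) : φ₁ ∈ subf ψ :=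
  subf_closed ψ _ h φ₁ (by simp [subf, mem_subf_self])

lemma untl_mem_right {ψ φ₁ φ₂ : LTL γ} (h : (.untl φ₁ φ₂) ∈ subf ψ) : φ₂ ∈ subf ψ :=
  subf_closed ψ _ h φ₂ (by simp [subf, mem_subf_self])

lemma release_mem_left {ψ φ₁ φ₂ : LTL γ} (h : (.release φ₁ φ₂) ∈ subf ψ) : φ₁ ∈ subf ψ :=
  subf_closed ψ _ h φ₁ (by simp [subf, mem_subf_self])

lemma release_mem_right {ψ φ₁ φ₂ : LTL γ} (h : (.release φ₁ φ₂) ∈ subf ψ) : φ₂ ∈ subf ψ :=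
  subf_closed ψ _ h φ₂ (by simp [subf, mem_subf_self])

/-- The subformula domain. -/
def Dty (ψ : LTL γ) : Type := {χ : LTL γ // χ ∈ subf ψ}

instance finDty (ψ : LTL γ) : Finite (Dty ψ) := by
  have h : {χ : LTL γ | χ ∈ subf ψ}.Finite := (subf ψ).finite_toSet
  exact h.to_subtype

/-- The finite "transition type" monoid for ψ. -/
def Mty (ψ : LTL γ) : Type :=
  (Dty ψ → Prop) → ((Dty ψ → Prop) × (Dty ψ → Prop) × (Dty ψ → Prop))

noncomputable instance finProp : Finite Prop := Finite.of_equiv Bool Equiv.propEquivBool.symm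

instance finMty (ψ : LTL γ) : Finite (Mty ψ) := by
  unfold Mty
  infer_instance

def extD (ψ : LTL γ) (Y : Dty ψ → Prop) : LTL γ → Prop :=
  fun χ => ∃ h : χ ∈ subf ψ, Y ⟨χ, h⟩

def resD (ψ : LTL γ) (T : LTL γ → Prop) : Dty ψ → Prop := fun d => T d.1

lemma extD_res (ψ : LTL γ) (T : LTL γ → Prop) :
    ∀ χ ∈ subf ψ, (extD ψ (resD ψ T) χ ↔ T χ) :=
  fun χ h => ⟨fun ⟨_, ht⟩ => ht, fun ht => ⟨h, ht⟩⟩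

def hM (ψ : LTL γ) (l : List (Set γ)) : Mty ψ := fun Y =>
  (resD ψ (runF l (extD ψ Y)), resD ψ (fulF l (extD ψ Y)), resD ψ (brkF l (extD ψ Y)))

def mulM (ψ : LTL γ) (m₁ m₂ : Mty ψ) : Mty ψ := fun Y =>
  ((m₁ (m₂ Y).1).1, fun d => (m₁ (m₂ Y).1).2.1 d ∨ (m₂ Y).2.1 d,
   fun d => (m₁ (m₂ Y).1).2.2 d ∨ (m₂ Y).2.2 d)

lemma hM_hom (ψ : LTL γ) (l₁ l₂ : List (Set γ)) :
    hM ψ (l₁ ++ l₂) = mulM ψ (hM ψ l₁) (hM ψ l₂) := by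
  funext Y
  have hag : ∀ χ ∈ subf ψ, (runF l₂ (extD ψ Y) χ ↔ extD ψ ((hM ψ l₂ Y).1) χ) :=
    fun χ h => (extD_res ψ _ χ h).symm
  refine Prod.ext ?_ (Prod.ext ?_ ?_)
  · funext d
    apply propext
    show runF (l₁ ++ l₂) (extD ψ Y) d.1 ↔ runF l₁ (extD ψ (hM ψ l₂ Y).1) d.1
    rw [runF_append]
    exact runF_congr (ψ := ψ) hag l₁ d.1 d.2
  · funext d
    apply propext
    show fulF (l₁ ++ l₂) (extD ψ Y) d.1 ↔
      fulF l₁ (extD ψ (hM ψ l₂ Y).1) d.1 ∨ fulF l₂ (extD ψ Y) d.1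
    rw [fulF_append]
    exact or_congr (fulF_congr (ψ := ψ) hag l₁ d.1 d.2) Iff.rfl
  · funext d
    apply propext
    show brkF (l₁ ++ l₂) (extD ψ Y) d.1 ↔
      brkF l₁ (extD ψ (hM ψ l₂ Y).1) d.1 ∨ brkF l₂ (extD ψ Y) d.1
    rw [brkF_append]
    exact or_congr (brkF_congr (ψ := ψ) hag l₁ d.1 d.2) Iff.rfl

/-- A locally consistent and fulfilling truth-value assignment computes LTL truth. -/
lemma lemmaB {ψ : LTL γ} (w : ℕ → Set γ) (V : ℕ → LTL γ → Prop)
    (hloc : ∀ i, ∀ χ ∈ subf ψ, (V i χ ↔ stepF (w i) (V (i+1)) χ))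
    (hful : ∀ i φ₁ φ₂, LTL.untl φ₁ φ₂ ∈ subf ψ → V i (.untl φ₁ φ₂) →
      ∃ j, i ≤ j ∧ V j φ₂)
    (hbrk : ∀ i φ₁ φ₂, LTL.release φ₁ φ₂ ∈ subf ψ → ¬ V i (.release φ₁ φ₂) →
      ∃ j, i ≤ j ∧ ¬ V j φ₂) :
    ∀ χ, χ ∈ subf ψ → ∀ i, (V i χ ↔ LTL.Sat w i χ) := by
  intro χ
  induction χ with
  | tt => intro hχ i; rw [hloc i _ hχ]; simp [stepF, LTL.Sat]
  | atom a => intro hχ i; rw [hloc i _ hχ]; simp [stepF, LTL.Sat]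
  | neg φ ih =>
    intro hχ i
    have hφ : φ ∈ subf ψ := subf_closed ψ _ hχ φ (by simp [subf, mem_subf_self])
    rw [hloc i _ hχ]
    show ¬ stepF (w i) (V (i+1)) φ ↔ LTL.Sat w i (.neg φ)
    rw [← hloc i _ hφ, ih hφ i]
    exact Iff.rfl
  | disj φ₁ φ₂ ih₁ ih₂ =>
    intro hχ i
    have h1 : φ₁ ∈ subf ψ := subf_closed ψ _ hχ φ₁ (by simp [subf, mem_subf_self])
    have h2 : φ₂ ∈ subf ψ := subf_closed ψ _ hχ φ₂ (by simp [subf, mem_subf_self])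
    rw [hloc i _ hχ]
    show stepF (w i) (V (i+1)) φ₁ ∨ stepF (w i) (V (i+1)) φ₂ ↔ LTL.Sat w i (.disj φ₁ φ₂)
    rw [← hloc i _ h1, ← hloc i _ h2, ih₁ h1 i, ih₂ h2 i]
    exact Iff.rfl
  | conj φ₁ φ₂ ih₁ ih₂ =>
    intro hχ i
    have h1 : φ₁ ∈ subf ψ := subf_closed ψ _ hχ φ₁ (by simp [subf, mem_subf_self])
    have h2 : φ₂ ∈ subf ψ := subf_closed ψ _ hχ φ₂ (by simp [subf, mem_subf_self])
    rw [hloc i _ hχ]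
    show stepF (w i) (V (i+1)) φ₁ ∧ stepF (w i) (V (i+1)) φ₂ ↔ LTL.Sat w i (.conj φ₁ φ₂)
    rw [← hloc i _ h1, ← hloc i _ h2, ih₁ h1 i, ih₂ h2 i]
    exact Iff.rfl
  | next φ ih =>
    intro hχ i
    have hφ : φ ∈ subf ψ := subf_closed ψ _ hχ φ (by simp [subf, mem_subf_self])
    rw [hloc i _ hχ]
    show V (i+1) φ ↔ LTL.Sat w i (.next φ)
    rw [ih hφ (i+1)]
    exact Iff.rfl
  | untl φ₁ φ₂ ih₁ ih₂ =>
    intro hχ i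
    have h1 : φ₁ ∈ subf ψ := untl_mem_left hχ
    have h2 : φ₂ ∈ subf ψ := untl_mem_right hχ
    have locU : ∀ m, V m (.untl φ₁ φ₂) ↔
        (V m φ₂ ∨ (V m φ₁ ∧ V (m+1) (.untl φ₁ φ₂))) := by
      intro m
      rw [hloc m _ hχ]
      show stepF (w m) (V (m+1)) φ₂ ∨ (stepF (w m) (V (m+1)) φ₁ ∧ V (m+1) (.untl φ₁ φ₂)) ↔ _
      rw [← hloc m _ h1, ← hloc m _ h2]
    constructor
    · intro hU
      have hmin : ∃ n, V (i + n) φ₂ := by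
        obtain ⟨j, hij, hj⟩ := hful i φ₁ φ₂ hχ hU
        exact ⟨j - i, by rwa [Nat.add_sub_cancel' hij]⟩
      classical
      set n0 := Nat.find hmin with hn0
      have h2min : V (i + n0) φ₂ := Nat.find_spec hmin
      have hlt : ∀ n < n0, ¬ V (i+n) φ₂ := fun n hn => Nat.find_min hmin hn
      have hchain : ∀ m, m ≤ n0 → V (i + m) (.untl φ₁ φ₂) := by
        intro m
        induction m with
        | zero => intro _; simpa using hU
        | succ m ihm =>
          intro hm
          have hVm := ihm (by omega)
          rcases (locU (i+m)).mp hVm with hc | hc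
          · exact absurd hc (hlt m (by omega))
          · have : i + m + 1 = i + (m+1) := by omega
            rw [this] at hc
            exact hc.2
      have hphi1 : ∀ m, m < n0 → V (i+m) φ₁ := by
        intro m hm
        rcases (locU (i+m)).mp (hchain m (by omega)) with hc | hc
        · exact absurd hc (hlt m hm)
        · exact hc.1
      refine ⟨i + n0, by omega, (ih₂ h2 _).mp h2min, fun m hm1 hm2 => ?_⟩
      have := hphi1 (m - i) (by omega)
      rw [Nat.add_sub_cancel' hm1] at this
      exact (ih₁ h1 _).mp this
    · rintro ⟨j, hij, hj2, hj1⟩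
      have claim : ∀ d, d ≤ j - i → V (j - d) (.untl φ₁ φ₂) := by
        intro d
        induction d with
        | zero =>
          intro _
          exact (locU j).mpr (Or.inl ((ih₂ h2 j).mpr hj2))
        | succ d ihd =>
          intro hd
          have hv := ihd (by omega)
          have hm : j - (d+1) + 1 = j - d := by omega
          refine (locU (j - (d+1))).mpr (Or.inr ⟨?_, by rwa [hm]⟩)
          exact (ih₁ h1 _).mpr (hj1 _ (by omega) (by omega))
      have := claim (j - i) le_rfl
      rwa [Nat.sub_sub_self (by omega : i ≤ j)] at this
  | release φ₁ φ₂ ih₁ ih₂ =>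
    intro hχ i
    have h1 : φ₁ ∈ subf ψ := release_mem_left hχ
    have h2 : φ₂ ∈ subf ψ := release_mem_right hχ
    have locR : ∀ m, V m (.release φ₁ φ₂) ↔
        (V m φ₂ ∧ (V m φ₁ ∨ V (m+1) (.release φ₁ φ₂))) := by
      intro m
      rw [hloc m _ hχ]
      show stepF (w m) (V (m+1)) φ₂ ∧ (stepF (w m) (V (m+1)) φ₁ ∨ V (m+1) (.release φ₁ φ₂)) ↔ _
      rw [← hloc m _ h1, ← hloc m _ h2]
    constructor
    · intro hR
      by_cases hall : ∀ j, i ≤ j → V j (.release φ₁ φ₂)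
      · exact Or.inl fun j hj => (ih₂ h2 j).mp ((locR j).mp (hall j hj)).1
      · push_neg at hall
        obtain ⟨j, hij, hnR⟩ := hall
        classical
        have hmin : ∃ n, ¬ V (i + n) (.release φ₁ φ₂) :=
          ⟨j - i, by rwa [Nat.add_sub_cancel' hij]⟩
        set n0 := Nat.find hmin with hn0
        have hspec : ¬ V (i + n0) (.release φ₁ φ₂) := Nat.find_spec hmin
        have hchain : ∀ m, m < n0 → V (i+m) (.release φ₁ φ₂) := by
          intro m hm
          have := Nat.find_min hmin hm
          exact not_not.mp this
        have hn0pos : 0 < n0 := by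
          rcases Nat.eq_zero_or_pos n0 with h | h
          · exfalso; apply hspec; rw [h]; simpa using hR
          · exact h
        set m0 := n0 - 1 with hm0
        have hVm0 : V (i + m0) (.release φ₁ φ₂) := hchain m0 (by omega)
        have hsucc : i + m0 + 1 = i + n0 := by omega
        obtain ⟨hc2, hc⟩ := (locR (i+m0)).mp hVm0
        have hc1 : V (i+m0) φ₁ := by
          rcases hc with h | h
          · exact h
          · rw [hsucc] at h; exact absurd h hspec
        refine Or.inr ⟨i + m0, by omega, (ih₁ h1 _).mp hc1, fun m hm1 hm2 => ?_⟩
        have := ((locR (i + (m - i))).mp (hchain (m - i) (by omega))).1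
        rw [Nat.add_sub_cancel' hm1] at this
        exact (ih₂ h2 _).mp this
    · intro hS
      by_contra hnV
      obtain ⟨j, hij, hj2n⟩ := hbrk i φ₁ φ₂ hχ hnV
      rcases hS with hall | ⟨j', hij', h1', h2'⟩
      · exact hj2n ((ih₂ h2 j).mpr (hall j hij))
      · apply hnV
        have claim : ∀ d, d ≤ j' - i → V (j' - d) (.release φ₁ φ₂) := by
          intro d
          induction d with
          | zero =>
            intro _
            exact (locR j').mpr ⟨(ih₂ h2 j').mpr (h2' j' hij' le_rfl),
              Or.inl ((ih₁ h1 j').mpr h1')⟩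
          | succ d ihd =>
            intro hd
            have hv := ihd (by omega)
            have hm : j' - (d+1) + 1 = j' - d := by omega
            refine (locR (j' - (d+1))).mpr ⟨?_, Or.inr (by rwa [hm])⟩
            exact (ih₂ h2 _).mpr (h2' _ (by omega) (by omega))
        have := claim (j' - i) le_rfl
        rwa [Nat.sub_sub_self (by omega : i ≤ j')] at this

lemma sat_shift (w : ℕ → Set γ) (c : ℕ) : ∀ (φ : LTL γ) (i : ℕ),
    LTL.Sat w (i + c) φ ↔ LTL.Sat (fun m => w (m + c)) i φ := by
  intro φ
  induction φ with
  | tt => intro i; simp [LTL.Sat]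
  | atom a => intro i; simp [LTL.Sat]
  | neg φ ih => intro i; exact not_congr (ih i)
  | disj φ₁ φ₂ ih₁ ih₂ => intro i; exact or_congr (ih₁ i) (ih₂ i)
  | conj φ₁ φ₂ ih₁ ih₂ => intro i; exact and_congr (ih₁ i) (ih₂ i)
  | next φ ih =>
    intro i
    show LTL.Sat w (i + c + 1) φ ↔ LTL.Sat _ (i+1) φ
    rw [show i + c + 1 = (i+1) + c by omega]
    exact ih (i+1)
  | untl φ₁ φ₂ ih₁ ih₂ =>
    intro i
    constructor
    · rintro ⟨j, hij, h2, h1⟩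
      refine ⟨j - c, by omega, ?_, fun m hm1 hm2 => ?_⟩
      · rw [← ih₂]; rwa [show j - c + c = j by omega]
      · have := h1 (m + c) (by omega) (by omega)
        rwa [ih₁] at this
    · rintro ⟨j, hij, h2, h1⟩
      refine ⟨j + c, by omega, (ih₂ j).mpr h2, fun m hm1 hm2 => ?_⟩
      have := h1 (m - c) (by omega) (by omega)
      rw [← ih₁] at this
      rwa [show m - c + c = m by omega] at this
  | release φ₁ φ₂ ih₁ ih₂ =>
    intro i
    constructor
    · rintro (hall | ⟨j, hij, h1, h2⟩)
      · refine Or.inl fun j hj => ?_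
        rw [← ih₂]
        exact hall (j + c) (by omega)
      · refine Or.inr ⟨j - c, by omega, ?_, fun m hm1 hm2 => ?_⟩
        · rw [← ih₁]; rwa [show j - c + c = j by omega]
        · have := h2 (m + c) (by omega) (by omega)
          rwa [ih₂] at this
    · rintro (hall | ⟨j, hij, h1, h2⟩)
      · refine Or.inl fun j hj => ?_
        have := hall (j - c) (by omega)
        rw [← ih₂] at this
        rwa [show j - c + c = j by omega] at this
      · refine Or.inr ⟨j + c, by omega, (ih₁ j).mpr h1, fun m hm1 hm2 => ?_⟩
        have := h2 (m - c) (by omega) (by omega)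
        rw [← ih₂] at this
        rwa [show m - c + c = m by omega] at this

lemma seg_shift (w : ℕ → β) (c i j : ℕ) :
    seg w (i + c) (j + c) = seg (fun m => w (m + c)) i j := by
  have : (j + c) - (i + c) = j - i := by omega
  simp only [seg, this]
  apply List.map_congr_left
  intro r _
  show w (i + c + r) = w (i + r + c)
  congr 1
  omega

/-- The canonical periodic word generated by a nonempty finite word. -/
def wstar (u1 : List (Set γ)) (hu1 : u1 ≠ []) : ℕ → Set γ :=
  fun i => u1.get ⟨i % u1.length, Nat.mod_lt _ (List.length_pos_iff.mpr hu1)⟩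

lemma wstar_shift (u1 : List (Set γ)) (hu1 : u1 ≠ []) (c : ℕ) :
    (fun m => wstar u1 hu1 (m + c * u1.length)) = wstar u1 hu1 := by
  funext m
  simp only [wstar]
  congr 1
  apply Fin.ext
  show (m + c * u1.length) % u1.length = m % u1.length
  simp [Nat.add_mul_mod_self_right]

lemma seg_wstar (u1 : List (Set γ)) (hu1 : u1 ≠ []) :
    seg (wstar u1 hu1) 0 u1.length = u1 := by
  apply List.ext_getElem
  · simp [seg_len]
  · intro i h1 h2
    have h3 : i < u1.length := by simpa [seg_len] using h1
    simp only [seg, Nat.sub_zero, List.getElem_map, List.getElem_range, wstar]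
    simp [List.get_eq_getElem, Nat.mod_eq_of_lt h3]

lemma sat_wstar_mul (u1 : List (Set γ)) (hu1 : u1 ≠ []) (c : ℕ) (χ : LTL γ) :
    LTL.Sat (wstar u1 hu1) (c * u1.length) χ ↔ LTL.Sat (wstar u1 hu1) 0 χ := by
  have h := sat_shift (wstar u1 hu1) (c * u1.length) χ 0
  rw [zero_add] at h
  rw [h, wstar_shift]

lemma runF_wstar_fix (u1 : List (Set γ)) (hu1 : u1 ≠ []) (χ : LTL γ) :
    runF u1 (fun χ' => LTL.Sat (wstar u1 hu1) 0 χ') χ ↔ LTL.Sat (wstar u1 hu1) 0 χ := by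
  have hfun : (fun χ' => LTL.Sat (wstar u1 hu1) (0 + u1.length) χ') =
      (fun χ' => LTL.Sat (wstar u1 hu1) 0 χ') := by
    funext χ'
    apply propext
    rw [zero_add]
    have := sat_wstar_mul u1 hu1 1 χ'
    rwa [one_mul] at this
  have h := runF_seg (wstar u1 hu1) u1.length 0 χ
  rw [hfun] at h
  rw [show (0:ℕ) + u1.length = u1.length by omega] at h
  rwa [seg_wstar] at h

lemma hM_wstar_pow (ψ : LTL γ) (u1 : List (Set γ)) (hu1 : u1 ≠ [])
    (hee : mulM ψ (hM ψ u1) (hM ψ u1) = hM ψ u1) (m : ℕ) :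
    hM ψ (seg (wstar u1 hu1) 0 ((m+1) * u1.length)) = hM ψ u1 := by
  induction m with
  | zero => rw [show (0+1) * u1.length = u1.length by ring, seg_wstar]
  | succ m ih =>
    have hsplit : seg (wstar u1 hu1) 0 ((m+1) * u1.length) ++
        seg (wstar u1 hu1) ((m+1) * u1.length) ((m+2) * u1.length) =
        seg (wstar u1 hu1) 0 ((m+2) * u1.length) :=
      seg_append _ (by positivity) (by nlinarith)
    have hblk : seg (wstar u1 hu1) ((m+1) * u1.length) ((m+2) * u1.length) = u1 := by
      have h1 : (m+1) * u1.length = 0 + (m+1) * u1.length := by omega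
      have h2 : (m+2) * u1.length = u1.length + (m+1) * u1.length := by ring
      rw [h1, h2, seg_shift, wstar_shift, seg_wstar]
    rw [show m + 1 + 1 = m + 2 by omega, ← hsplit, hM_hom, ih, hblk, hee]

lemma hM_ful_wstar (ψ : LTL γ) (u1 : List (Set γ)) (hu1 : u1 ≠ [])
    (hee : mulM ψ (hM ψ u1) (hM ψ u1) = hM ψ u1)
    (φ₁ φ₂ : LTL γ) (hmem : (LTL.untl φ₁ φ₂) ∈ subf ψ)
    (hX : LTL.Sat (wstar u1 hu1) 0 (.untl φ₁ φ₂)) :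
    (hM ψ u1 (resD ψ (fun χ => LTL.Sat (wstar u1 hu1) 0 χ))).2.1
      ⟨φ₂, untl_mem_right hmem⟩ := by
  set W := wstar u1 hu1 with hW
  set Xf : LTL γ → Prop := fun χ => LTL.Sat W 0 χ with hXf
  obtain ⟨j, -, hj2, -⟩ := hX
  have hlen : 0 < u1.length := List.length_pos_iff.mpr hu1
  set endp := (j+1) * u1.length with hendp
  have hjlt : j < endp := by
    have : j + 1 ≤ (j+1) * u1.length := Nat.le_mul_of_pos_right _ hlen
    omega
  have hMl : hM ψ (seg W 0 endp) = hM ψ u1 := hM_wstar_pow ψ u1 hu1 hee j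
  -- fulfillment inside the long segment, with the true continuation
  have hrun : (runF (seg W (j+1) endp) (fun χ => LTL.Sat W endp χ)) =
      (fun χ => LTL.Sat W (j+1) χ) := by
    funext χ
    apply propext
    have h := runF_seg W (endp - (j+1)) (j+1) χ
    rwa [show (j+1) + (endp - (j+1)) = endp by omega] at h
  have hstep : stepF (W j) (runF (seg W (j+1) endp) (fun χ => LTL.Sat W endp χ)) φ₂ := by
    rw [hrun]
    exact (sat_iff_step W φ₂ j).mp hj2
  have hful1 : fulF (seg W 0 endp) (fun χ => LTL.Sat W endp χ) φ₂ :=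
    fulF_seg_of W _ φ₂ j 0 endp j (by omega) hjlt (by omega) hstep
  -- switch the continuation
  have hag : ∀ χ ∈ subf ψ, ((fun χ' => LTL.Sat W endp χ') χ ↔ extD ψ (resD ψ Xf) χ) := by
    intro χ hχ
    rw [extD_res ψ Xf χ hχ]
    exact sat_wstar_mul u1 hu1 (j+1) χ
  have hful2 : fulF (seg W 0 endp) (extD ψ (resD ψ Xf)) φ₂ :=
    (fulF_congr (ψ := ψ) hag _ φ₂ (untl_mem_right hmem)).mp hful1
  rw [← hMl]
  exact hful2

lemma hM_brk_wstar (ψ : LTL γ) (u1 : List (Set γ)) (hu1 : u1 ≠ [])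
    (hee : mulM ψ (hM ψ u1) (hM ψ u1) = hM ψ u1)
    (φ₁ φ₂ : LTL γ) (hmem : (LTL.release φ₁ φ₂) ∈ subf ψ)
    (hX : ¬ LTL.Sat (wstar u1 hu1) 0 (.release φ₁ φ₂)) :
    (hM ψ u1 (resD ψ (fun χ => LTL.Sat (wstar u1 hu1) 0 χ))).2.2
      ⟨φ₂, release_mem_right hmem⟩ := by
  set W := wstar u1 hu1 with hW
  set Xf : LTL γ → Prop := fun χ => LTL.Sat W 0 χ with hXf
  have hex : ∃ j, ¬ LTL.Sat W j φ₂ := by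
    by_contra hc
    push_neg at hc
    exact hX (Or.inl fun j _ => hc j)
  obtain ⟨j, hj2⟩ := hex
  have hlen : 0 < u1.length := List.length_pos_iff.mpr hu1
  set endp := (j+1) * u1.length with hendp
  have hjlt : j < endp := by
    have : j + 1 ≤ (j+1) * u1.length := Nat.le_mul_of_pos_right _ hlen
    omega
  have hMl : hM ψ (seg W 0 endp) = hM ψ u1 := hM_wstar_pow ψ u1 hu1 hee j
  have hrun : (runF (seg W (j+1) endp) (fun χ => LTL.Sat W endp χ)) =
      (fun χ => LTL.Sat W (j+1) χ) := by
    funext χ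
    apply propext
    have h := runF_seg W (endp - (j+1)) (j+1) χ
    rwa [show (j+1) + (endp - (j+1)) = endp by omega] at h
  have hstep : ¬ stepF (W j) (runF (seg W (j+1) endp) (fun χ => LTL.Sat W endp χ)) φ₂ := by
    rw [hrun]
    exact fun hc => hj2 ((sat_iff_step W φ₂ j).mpr hc)
  have hbrk1 : brkF (seg W 0 endp) (fun χ => LTL.Sat W endp χ) φ₂ :=
    brkF_seg_of W _ φ₂ j 0 endp j (by omega) hjlt (by omega) hstep
  have hag : ∀ χ ∈ subf ψ, ((fun χ' => LTL.Sat W endp χ') χ ↔ extD ψ (resD ψ Xf) χ) := by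
    intro χ hχ
    rw [extD_res ψ Xf χ hχ]
    exact sat_wstar_mul u1 hu1 (j+1) χ
  have hbrk2 : brkF (seg W 0 endp) (extD ψ (resD ψ Xf)) φ₂ :=
    (brkF_congr (ψ := ψ) hag _ φ₂ (release_mem_right hmem)).mp hbrk1
  rw [← hMl]
  exact hbrk2

/-- Next boundary strictly after `pos` among the values of `J`. -/
noncomputable def nbF (J : ℕ → ℕ) (hJu : ∀ pos : ℕ, ∃ r, pos < J r) (pos : ℕ) : ℕ :=
  J (Nat.find (hJu pos))

lemma nbF_gt (J : ℕ → ℕ) (hJu : ∀ pos : ℕ, ∃ r, pos < J r) (pos : ℕ) :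
    pos < nbF J hJu pos := Nat.find_spec (hJu pos)

lemma nbF_eq (J : ℕ → ℕ) (hJu : ∀ pos : ℕ, ∃ r, pos < J r) {pos m : ℕ}
    (h1 : pos ≤ m) (h2 : m < nbF J hJu pos) : nbF J hJu m = nbF J hJu pos := by
  unfold nbF
  congr 1
  apply le_antisymm
  · exact Nat.find_le h2
  · exact Nat.find_le (lt_of_le_of_lt h1 (Nat.find_spec (hJu m)))

/-- The key lemma: the truth value of `ψ` on a word with a strong `(s, hM u1)`
factorization is computed by `s` and `hM u1` from the canonical periodic word `u1^ω`. -/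
lemma lemmaC (ψ : LTL γ) (u1 : List (Set γ)) (hu1 : u1 ≠ [])
    (hee : mulM ψ (hM ψ u1) (hM ψ u1) = hM ψ u1)
    (s : Mty ψ) (v : ℕ → Set γ) (hv : Fact (hM ψ) v s (hM ψ u1)) :
    LTL.Sat v 0 ψ ↔
      (mulM ψ s (hM ψ u1) (resD ψ (fun χ => LTL.Sat (wstar u1 hu1) 0 χ))).1
        ⟨ψ, mem_subf_self ψ⟩ := by
  classical
  obtain ⟨J, hJ, hs, hb⟩ := hv
  set Xf : LTL γ → Prop := fun χ => LTL.Sat (wstar u1 hu1) 0 χ with hXf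
  set Y : Dty ψ → Prop := resD ψ Xf with hY
  have hJge : ∀ n, n ≤ J n := fun n => by
    induction n with
    | zero => exact Nat.zero_le _
    | succ n ih => have := hJ (show n < n + 1 by omega); omega
  have hJu : ∀ pos : ℕ, ∃ r, pos < J r := fun pos =>
    ⟨pos + 1, lt_of_lt_of_le (by omega) (hJge (pos+1))⟩
  set nb : ℕ → ℕ := nbF J hJu with hnb
  have nb_gt : ∀ pos, pos < nb pos := nbF_gt J hJu
  have nb_eq : ∀ {pos m}, pos ≤ m → m < nb pos → nb m = nb pos :=
    fun h1 h2 => nbF_eq J hJu h1 h2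
  -- every boundary-to-next-boundary block has type e
  have key1 : ∀ pos, hM ψ (seg v (nb pos) (nb (nb pos))) = hM ψ u1 := by
    intro pos
    have hlt : J (Nat.find (hJu pos)) < J (Nat.find (hJu (nb pos))) := nb_gt (nb pos)
    exact hb _ _ (hJ.lt_iff_lt.mp hlt)
  -- e acts as identity on (the restriction of) Xf
  have efix : ∀ χ, ∀ hχ : χ ∈ subf ψ, ((hM ψ u1 Y).1 ⟨χ, hχ⟩ ↔ Xf χ) := by
    intro χ hχ
    show runF u1 (extD ψ Y) χ ↔ Xf χ
    rw [runF_congr (ψ := ψ) (fun χ' hχ' => extD_res ψ Xf χ' hχ') u1 χ hχ]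
    exact runF_wstar_fix u1 hu1 χ
  have blockfix : ∀ i j : ℕ, hM ψ (seg v i j) = hM ψ u1 →
      ∀ χ, ∀ _ : χ ∈ subf ψ, (runF (seg v i j) Xf χ ↔ Xf χ) := by
    intro i j hij χ hχ
    rw [show (runF (seg v i j) Xf χ ↔ Xf χ) ↔ _ from Iff.rfl]
    have h1 : runF (seg v i j) Xf χ ↔ runF (seg v i j) (extD ψ Y) χ :=
      runF_congr (ψ := ψ) (fun χ' hχ' => (extD_res ψ Xf χ' hχ').symm) _ χ hχ
    rw [h1]
    have h2 : runF (seg v i j) (extD ψ Y) χ ↔ (hM ψ (seg v i j) Y).1 ⟨χ, hχ⟩ := Iff.rfl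
    rw [h2, hij]
    exact efix χ hχ
  set V : ℕ → LTL γ → Prop := fun pos χ => runF (seg v pos (nb pos)) Xf χ with hV
  have Vbound : ∀ pos χ, ∀ _ : χ ∈ subf ψ, (V (nb pos) χ ↔ Xf χ) := by
    intro pos χ hχ
    exact blockfix (nb pos) (nb (nb pos)) (key1 pos) χ hχ
  have Vloc : ∀ pos, ∀ χ ∈ subf ψ, (V pos χ ↔ stepF (v pos) (V (pos+1)) χ) := by
    intro pos χ hχ
    have hcons : seg v pos (nb pos) = v pos :: seg v (pos+1) (nb pos) :=
      seg_cons v (nb_gt pos)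
    show runF (seg v pos (nb pos)) Xf χ ↔ _
    rw [hcons]
    show stepF (v pos) (runF (seg v (pos+1) (nb pos)) Xf) χ ↔ _
    rcases Nat.lt_or_ge (pos+1) (nb pos) with hlt | hge
    · have hnbeq : nb (pos+1) = nb pos := nb_eq (by omega) hlt
      apply stepF_congr
      intro χ' _
      show runF (seg v (pos+1) (nb pos)) Xf χ' ↔ runF (seg v (pos+1) (nb (pos+1))) Xf χ'
      rw [hnbeq]
    · have heq : nb pos = pos + 1 := by have := nb_gt pos; omega
      rw [heq, seg_self]
      apply stepF_congr
      intro χ' hχ'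
      show Xf χ' ↔ V (pos+1) χ'
      have hχ'ψ : χ' ∈ subf ψ := subf_closed ψ χ hχ χ' hχ'
      have := Vbound pos χ' hχ'ψ
      rw [heq] at this
      exact this.symm
  -- fulfillment of until obligations
  have Vful : ∀ pos φ₁ φ₂, (LTL.untl φ₁ φ₂) ∈ subf ψ → V pos (.untl φ₁ φ₂) →
      ∃ j, pos ≤ j ∧ V j φ₂ := by
    intro pos φ₁ φ₂ hχ hU
    have h1 : φ₁ ∈ subf ψ := untl_mem_left hχ
    have h2 : φ₂ ∈ subf ψ := untl_mem_right hχ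
    have locU : ∀ m, V m (.untl φ₁ φ₂) ↔
        (V m φ₂ ∨ (V m φ₁ ∧ V (m+1) (.untl φ₁ φ₂))) := by
      intro m
      rw [Vloc m _ hχ]
      show stepF (v m) (V (m+1)) φ₂ ∨ (stepF (v m) (V (m+1)) φ₁ ∧ V (m+1) (.untl φ₁ φ₂)) ↔ _
      rw [← Vloc m _ h1, ← Vloc m _ h2]
    have reach : ∀ d m, nb pos - m = d → pos ≤ m → m ≤ nb pos →
        V m (.untl φ₁ φ₂) → (∃ j, pos ≤ j ∧ V j φ₂) ∨ V (nb pos) (.untl φ₁ φ₂) := by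
      intro d
      induction d with
      | zero =>
        intro m hd hm1 hm2 hU
        have : m = nb pos := by omega
        subst this
        exact Or.inr hU
      | succ d ih =>
        intro m hd hm1 hm2 hU
        rcases (locU m).mp hU with hc | hc
        · exact Or.inl ⟨m, hm1, hc⟩
        · exact ih (m+1) (by omega) (by omega) (by omega) hc.2
    rcases reach (nb pos - pos) pos rfl le_rfl (by have := nb_gt pos; omega) hU with h | h
    · exact h
    · -- the obligation is fulfilled in the next block
      have hXU : Xf (.untl φ₁ φ₂) := (Vbound pos _ hχ).mp h
      have hfulX := hM_ful_wstar ψ u1 hu1 hee φ₁ φ₂ hχ hXU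
      set b := nb pos with hbdef
      have hfulseg : fulF (seg v b (nb b)) (extD ψ Y) φ₂ := by
        have := key1 pos
        show (hM ψ (seg v b (nb b)) Y).2.1 ⟨φ₂, untl_mem_right hχ⟩
        rw [this]
        exact hfulX
      obtain ⟨m, hbm, hmlt, hstep⟩ :=
        fulF_seg_to v (extD ψ Y) φ₂ (nb b - b) b (nb b) rfl hfulseg
      refine ⟨m, by have := nb_gt pos; omega, ?_⟩
      have hnbm : nb m = nb b := nb_eq hbm hmlt
      show runF (seg v m (nb m)) Xf φ₂
      rw [hnbm, seg_cons v hmlt]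
      show stepF (v m) (runF (seg v (m+1) (nb b)) Xf) φ₂
      have hagree : ∀ χ' ∈ subf φ₂,
          (runF (seg v (m+1) (nb b)) (extD ψ Y) χ' ↔ runF (seg v (m+1) (nb b)) Xf χ') := by
        intro χ' hχ'
        exact runF_congr (ψ := ψ) (fun χ'' hχ'' => extD_res ψ Xf χ'' hχ'') _ χ'
          (subf_closed ψ φ₂ h2 χ' hχ')
      exact (stepF_congr (v m) φ₂ hagree).mp hstep
  -- co-fulfillment of release obligations
  have Vbrk : ∀ pos φ₁ φ₂, (LTL.release φ₁ φ₂) ∈ subf ψ → ¬ V pos (.release φ₁ φ₂) →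
      ∃ j, pos ≤ j ∧ ¬ V j φ₂ := by
    intro pos φ₁ φ₂ hχ hR
    have h1 : φ₁ ∈ subf ψ := release_mem_left hχ
    have h2 : φ₂ ∈ subf ψ := release_mem_right hχ
    have locR : ∀ m, V m (.release φ₁ φ₂) ↔
        (V m φ₂ ∧ (V m φ₁ ∨ V (m+1) (.release φ₁ φ₂))) := by
      intro m
      rw [Vloc m _ hχ]
      show stepF (v m) (V (m+1)) φ₂ ∧ (stepF (v m) (V (m+1)) φ₁ ∨ V (m+1) (.release φ₁ φ₂)) ↔ _
      rw [← Vloc m _ h1, ← Vloc m _ h2]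
    have reach : ∀ d m, nb pos - m = d → pos ≤ m → m ≤ nb pos →
        ¬ V m (.release φ₁ φ₂) → (∃ j, pos ≤ j ∧ ¬ V j φ₂) ∨ ¬ V (nb pos) (.release φ₁ φ₂) := by
      intro d
      induction d with
      | zero =>
        intro m hd hm1 hm2 hR
        have : m = nb pos := by omega
        subst this
        exact Or.inr hR
      | succ d ih =>
        intro m hd hm1 hm2 hR
        by_cases hc2 : V m φ₂
        · by_cases hcR : V (m+1) (.release φ₁ φ₂)
          · by_cases hc1 : V m φ₁
            · exact absurd ((locR m).mpr ⟨hc2, Or.inl hc1⟩) hR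
            · exact absurd ((locR m).mpr ⟨hc2, Or.inr hcR⟩) hR
          · exact ih (m+1) (by omega) (by omega) (by omega) hcR
        · exact Or.inl ⟨m, hm1, hc2⟩
    rcases reach (nb pos - pos) pos rfl le_rfl (by have := nb_gt pos; omega) hR with h | h
    · exact h
    · have hXR : ¬ Xf (.release φ₁ φ₂) := fun hc => h ((Vbound pos _ hχ).mpr hc)
      have hbrkX := hM_brk_wstar ψ u1 hu1 hee φ₁ φ₂ hχ hXR
      set b := nb pos with hbdef
      have hbrkseg : brkF (seg v b (nb b)) (extD ψ Y) φ₂ := by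
        have := key1 pos
        show (hM ψ (seg v b (nb b)) Y).2.2 ⟨φ₂, release_mem_right hχ⟩
        rw [this]
        exact hbrkX
      obtain ⟨m, hbm, hmlt, hstep⟩ :=
        brkF_seg_to v (extD ψ Y) φ₂ (nb b - b) b (nb b) rfl hbrkseg
      refine ⟨m, by have := nb_gt pos; omega, ?_⟩
      have hnbm : nb m = nb b := nb_eq hbm hmlt
      intro hc
      apply hstep
      have hVm : runF (seg v m (nb m)) Xf φ₂ := hc
      rw [hnbm, seg_cons v hmlt] at hVm
      have hstep2 : stepF (v m) (runF (seg v (m+1) (nb b)) Xf) φ₂ := hVm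
      have hagree : ∀ χ' ∈ subf φ₂,
          (runF (seg v (m+1) (nb b)) Xf χ' ↔ runF (seg v (m+1) (nb b)) (extD ψ Y) χ') := by
        intro χ' hχ'
        exact runF_congr (ψ := ψ) (fun χ'' hχ'' => (extD_res ψ Xf χ'' hχ'').symm) _ χ'
          (subf_closed ψ φ₂ h2 χ' hχ')
      exact (stepF_congr (v m) φ₂ hagree).mp hstep2
  -- V computes the truth values for v
  have hVS := lemmaB (ψ := ψ) v V Vloc Vful Vbrk
  -- compare the value at 0 with the (s,e)-computed value
  have hfin : LTL.Sat v 0 ψ ↔ runF (seg v 0 (J 1)) Xf ψ := by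
    rw [← hVS ψ (mem_subf_self ψ) 0]
    show runF (seg v 0 (nb 0)) Xf ψ ↔ _
    -- nb 0 is J 0 or J 1
    have hr0 : Nat.find (hJu 0) ≤ 1 := by
      by_contra hc
      push_neg at hc
      have h1le : J 1 ≤ 0 := le_of_not_gt (Nat.find_min (hJu 0) (by omega))
      have := hJ (show 0 < 1 by omega)
      omega
    rcases Nat.lt_or_ge (Nat.find (hJu 0)) 1 with hc | hc
    · -- nb 0 = J 0
      have hnb0 : nb 0 = J 0 := by
        show nbF J hJu 0 = J 0
        unfold nbF
        congr 1
        omega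
      have hJ01 : J 0 ≤ J 1 := le_of_lt (hJ (by omega))
      have hsplit : seg v 0 (J 0) ++ seg v (J 0) (J 1) = seg v 0 (J 1) :=
        seg_append v (Nat.zero_le _) hJ01
      rw [← hsplit, runF_append]
      rw [hnb0]
      apply runF_congr (ψ := ψ) _ _ ψ (mem_subf_self ψ)
      intro χ' hχ'
      exact (blockfix (J 0) (J 1) (hb 0 1 (by omega)) χ' hχ').symm
    · -- nb 0 = J 1
      have hnb0 : nb 0 = J 1 := by
        show nbF J hJu 0 = J 1
        unfold nbF
        congr 1
        omega
      rw [hnb0]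
  rw [hfin]
  have hsplit : seg v 0 (J 0) ++ seg v (J 0) (J 1) = seg v 0 (J 1) :=
    seg_append v (Nat.zero_le _) (le_of_lt (hJ (by omega)))
  have hMeq : hM ψ (seg v 0 (J 1)) = mulM ψ s (hM ψ u1) := by
    rw [← hsplit, hM_hom, hs, hb 0 1 (by omega)]
  have hfinal : runF (seg v 0 (J 1)) Xf ψ ↔
      (hM ψ (seg v 0 (J 1)) Y).1 ⟨ψ, mem_subf_self ψ⟩ := by
    show _ ↔ runF (seg v 0 (J 1)) (extD ψ Y) ψ
    exact runF_congr (ψ := ψ) (fun χ' hχ' => (extD_res ψ Xf χ' hχ').symm) _ ψ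
      (mem_subf_self ψ)
  rw [hfinal, hMeq]

/-- Words with a common strong factorization type satisfy the same LTL formulas. -/
theorem mergeLTL (ψ : LTL γ) (w w' : ℕ → Set γ) (s e : Mty ψ)
    (hw : Fact (hM ψ) w s e) (hw' : Fact (hM ψ) w' s e) :
    (LTL.Sat w 0 ψ ↔ LTL.Sat w' 0 ψ) := by
  obtain ⟨I, hI, hs, hb⟩ := hw
  set u1 := seg w (I 0) (I 1) with hu1def
  have hu1 : u1 ≠ [] := by
    apply List.ne_nil_of_length_pos
    rw [hu1def, seg_len]
    have := hI (show 0 < 1 by omega)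
    omega
  have he : hM ψ u1 = e := hb 0 1 (by omega)
  have hee : mulM ψ (hM ψ u1) (hM ψ u1) = hM ψ u1 := by
    have h02 := hb 0 2 (by omega)
    have hsplit : seg w (I 0) (I 1) ++ seg w (I 1) (I 2) = seg w (I 0) (I 2) :=
      seg_append w (le_of_lt (hI (by omega))) (le_of_lt (hI (by omega)))
    have : hM ψ (seg w (I 0) (I 2)) = mulM ψ (hM ψ u1) (hM ψ (seg w (I 1) (I 2))) := by
      rw [← hsplit, hM_hom]
    rw [hb 1 2 (by omega), he] at this
    rw [he, ← this, h02]
  have hwF : Fact (hM ψ) w s (hM ψ u1) := by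
    rw [he]; exact ⟨I, hI, hs, hb⟩
  have hw'F : Fact (hM ψ) w' s (hM ψ u1) := by
    rw [he]; exact hw'
  rw [lemmaC ψ u1 hu1 hee s w hwF, lemmaC ψ u1 hu1 hee s w' hw'F]

/-- The language of an LTL formula is good. -/
theorem goodW_LTL (ψ : LTL γ) : GoodW (fun w : ℕ → Set γ => LTL.Sat w 0 ψ) :=
  ⟨Mty ψ, finMty ψ, mulM ψ, hM ψ, hM_hom ψ,
    fun w w' s e hw hw' => mergeLTL ψ w w' s e hw hw'⟩

/-- Ultimately periodic functions. -/
def UP {β : Type} (t : ℕ → β) : Prop :=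
  ∃ N P : ℕ, 0 < P ∧ ∀ i, N ≤ i → t (i + P) = t i

lemma lassoIdx_le_self {n ℓ i : ℕ} (h : i ≤ ℓ) : lassoIdx n ℓ i = i := if_pos h

lemma lassoIdx_zero (n ℓ : ℕ) : lassoIdx n ℓ 0 = 0 := if_pos (Nat.zero_le _)

lemma lassoIdx_bound {n ℓ : ℕ} (hn : n < ℓ) (i : ℕ) : lassoIdx n ℓ i ≤ ℓ := by
  unfold lassoIdx
  split
  · omega
  · have : (i - n) % (ℓ + 1 - n) < ℓ + 1 - n := Nat.mod_lt _ (by omega)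
    omega

lemma mod_succ_cases (a L : ℕ) (hL : 0 < L) :
    ((a + 1) % L = a % L + 1 ∧ a % L + 1 < L) ∨ ((a + 1) % L = 0 ∧ a % L = L - 1) := by
  have hdm := Nat.div_add_mod a L
  set r := a % L with hr
  have hrL : r < L := Nat.mod_lt _ hL
  have h1 : a + 1 = (r + 1) + L * (a / L) := by omega
  have h2 : (a + 1) % L = (r + 1) % L := by
    rw [h1, Nat.add_mul_mod_self_left]
  rcases Nat.lt_or_ge (r + 1) L with hc | hc
  · exact Or.inl ⟨by rw [h2, Nat.mod_eq_of_lt hc], hc⟩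
  · have : r + 1 = L := by omega
    refine Or.inr ⟨by rw [h2, this, Nat.mod_self], by omega⟩

lemma lassoIdx_succ {n ℓ : ℕ} (hn : n < ℓ) (i : ℕ) :
    (lassoIdx n ℓ (i+1) = lassoIdx n ℓ i + 1 ∧ lassoIdx n ℓ i < ℓ) ∨
    (lassoIdx n ℓ (i+1) = n ∧ lassoIdx n ℓ i = ℓ) := by
  set L := ℓ + 1 - n with hL
  rcases Nat.lt_or_ge i ℓ with hi | hi
  · left
    rw [lassoIdx_le_self (by omega : i ≤ ℓ), lassoIdx_le_self (by omega : i + 1 ≤ ℓ)]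
    exact ⟨rfl, hi⟩
  · rcases Nat.eq_or_lt_of_le hi with he | hlt
    · right
      rw [lassoIdx_le_self (le_of_eq he.symm)]
      constructor
      · show lassoIdx n ℓ (i+1) = n
        unfold lassoIdx
        rw [if_neg (by omega)]
        have : i + 1 - n = L := by omega
        rw [this, Nat.mod_self]
        omega
      · omega
  -- i > ℓ
    · have hi1 : ¬ (i ≤ ℓ) := by omega
      have hi2 : ¬ (i + 1 ≤ ℓ) := by omega
      have hx : lassoIdx n ℓ i = n + (i - n) % L := by unfold lassoIdx; rw [if_neg hi1]
      have hy : lassoIdx n ℓ (i+1) = n + (i + 1 - n) % L := by unfold lassoIdx; rw [if_neg hi2]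
      have hsub : i + 1 - n = (i - n) + 1 := by omega
      rcases mod_succ_cases (i - n) L (by omega) with ⟨hc1, hc2⟩ | ⟨hc1, hc2⟩
      · left
        rw [hx, hy, hsub, hc1]
        omega
      · right
        rw [hx, hy, hsub, hc1, hc2]
        omega

lemma lassoIdx_period {n ℓ : ℕ} (hn : n < ℓ) (i : ℕ) (hi : n ≤ i) :
    lassoIdx n ℓ (i + (ℓ + 1 - n)) = lassoIdx n ℓ i := by
  set L := ℓ + 1 - n with hL
  rcases Nat.lt_or_ge ℓ i with hlt | hge
  · have h1 : ¬ (i ≤ ℓ) := by omega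
    have h2 : ¬ (i + L ≤ ℓ) := by omega
    unfold lassoIdx
    rw [if_neg h1, if_neg h2]
    have : i + L - n = (i - n) + L := by omega
    rw [this, ← hL, Nat.add_mod_right]
  · have h2 : ¬ (i + L ≤ ℓ) := by omega
    rw [lassoIdx_le_self hge]
    unfold lassoIdx
    rw [if_neg h2]
    have h3 : i + L - n = (i - n) + L := by omega
    rw [h3, ← hL, Nat.add_mod_right, Nat.mod_eq_of_lt (by omega : i - n < L)]
    omega

lemma lasso_subset_traces {S α : Type} (K : Kripke S α) :
    K.LassoTraces ⊆ K.Traces := by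
  rintro t ⟨sf, n, ℓ, hnℓ, hinit, hsteps, hloop, hlab⟩
  refine ⟨fun i => sf (lassoIdx n ℓ i), ⟨?_, ?_⟩, hlab⟩
  · show sf (lassoIdx n ℓ 0) ∈ K.init
    rw [lassoIdx_zero]; exact hinit
  · intro i
    show K.delta (sf (lassoIdx n ℓ i)) (sf (lassoIdx n ℓ (i+1)))
    rcases lassoIdx_succ hnℓ i with ⟨h1, h2⟩ | ⟨h1, h2⟩
    · rw [h1]; exact hsteps _ h2
    · rw [h1, h2]; exact hloop

lemma lasso_up {S α : Type} (K : Kripke S α) (t : ℕ → Set α)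
    (ht : t ∈ K.LassoTraces) : UP t := by
  obtain ⟨sf, n, ℓ, hnℓ, hinit, hsteps, hloop, hlab⟩ := ht
  refine ⟨n, ℓ + 1 - n, by omega, fun i hi => ?_⟩
  rw [hlab, hlab, lassoIdx_period hnℓ i hi]

/-- Every trace of a finite Kripke structure has a lasso trace of the same
strong factorization type. -/
theorem exists_lasso_fact {S α : Type} [Finite S] (K : Kripke S α) (t : ℕ → Set α)
    (ht : t ∈ K.Traces) (M : Type) [Finite M] (mul : M → M → M) (h : List (Set α) → M)
    (hom : ∀ l₁ l₂, h (l₁ ++ l₂) = mul (h l₁) (h l₂)) :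
    ∃ t', t' ∈ K.LassoTraces ∧ ∃ s e, Fact h t s e ∧ Fact h t' s e := by
  obtain ⟨p, ⟨hp0, hpδ⟩, hlab⟩ := ht
  obtain ⟨I, ⟨q, e⟩, hI, hmono⟩ :=
    ramsey_pairs (C := S × M) (fun i j => (p i, h (seg t i j)))
  have hblk : ∀ r r', r < r' → h (seg t (I r) (I r')) = e := by
    intro r r' hr
    exact congrArg Prod.snd (hmono r r' hr)
  have hq : ∀ r, p (I r) = q := by
    intro r
    exact congrArg Prod.fst (hmono r (r+1) (by omega))
  set n := I 0 with hn
  set ℓ := I 2 - 1 with hℓ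
  have hI02 : I 0 + 2 ≤ I 2 := by
    have h1 := hI (show 0 < 1 by omega)
    have h2 := hI (show 1 < 2 by omega)
    omega
  have hnℓ : n < ℓ := by omega
  have hℓ1 : ℓ + 1 = I 2 := by omega
  set L := ℓ + 1 - n with hLdef
  have hLI : L = I 2 - I 0 := by omega
  set t' : ℕ → Set α := fun i => K.L (p (lassoIdx n ℓ i)) with ht'
  have ht'lasso : t' ∈ K.LassoTraces := by
    refine ⟨p, n, ℓ, hnℓ, hp0, fun i _ => hpδ i, ?_, fun i => rfl⟩
    have := hpδ ℓ
    rw [hℓ1] at this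
    rw [show p n = p (I 2) by rw [hq 0, hq 2]]
    exact this
  have ht'eq : ∀ i, i ≤ ℓ → t' i = t i := by
    intro i hi
    rw [ht']
    show K.L (p (lassoIdx n ℓ i)) = t i
    rw [lassoIdx_le_self hi, ← hlab i]
  have hup : ∀ i, n ≤ i → t' (i + L) = t' i := by
    intro i hi
    show K.L (p (lassoIdx n ℓ (i + L))) = K.L (p (lassoIdx n ℓ i))
    rw [lassoIdx_period hnℓ i hi]
  have hupmul : ∀ r i, n ≤ i → t' (i + r * L) = t' i := by
    intro r
    induction r with
    | zero => intro i _; simp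
    | succ r ih =>
      intro i hi
      have : i + (r+1) * L = (i + r * L) + L := by ring
      rw [this, hup _ (by omega : n ≤ i + r * L), ih i hi]
  set s := h (seg t 0 (I 0)) with hs
  refine ⟨t', ht'lasso, s, e, ⟨I, hI, rfl, hblk⟩, ?_⟩
  -- Fact for t' via consecutive blocks
  have hpre : seg t' 0 n = seg t 0 (I 0) := by
    apply seg_congr
    intro m _ hm
    exact ht'eq m (by omega)
  have hblk0 : seg t' n (n + L) = seg t n (n + L) := by
    apply seg_congr
    intro m _ hm
    exact ht'eq m (by omega)
  have hblkE : h (seg t' n (n + L)) = e := by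
    rw [hblk0]
    have : n + L = I 2 := by omega
    rw [this, hn]
    exact hblk 0 2 (by omega)
  have hblkr : ∀ r, seg t' (n + r * L) (n + (r+1) * L) = seg t' n (n + L) := by
    intro r
    have h1 : n + r * L = n + r * L := rfl
    have h2 : n + (r+1) * L = (n + L) + r * L := by ring
    rw [h2, show n + r * L = n + r * L from rfl]
    have h3 : seg t' (n + r * L) (n + L + r * L) =
        seg (fun m => t' (m + r * L)) n (n + L) := seg_shift t' (r * L) n (n + L)
    rw [h3]
    apply seg_congr
    intro m hm1 _
    exact hupmul r m hm1
  have hee : mul e e = e := by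
    have h01 := hblk 0 1 (by omega)
    have h12 := hblk 1 2 (by omega)
    have h02 := hblk 0 2 (by omega)
    have hsp : seg t (I 0) (I 1) ++ seg t (I 1) (I 2) = seg t (I 0) (I 2) :=
      seg_append t (le_of_lt (hI (by omega))) (le_of_lt (hI (by omega)))
    have hx : h (seg t (I 0) (I 2)) = mul e e := by
      rw [← hsp, hom, h01, h12]
    rw [← hx]
    exact h02
  apply fact_of_consecutive hom (I := fun r => n + r * L)
  · intro r r' hr
    show n + r * L < n + r' * L
    have hL : 0 < L := by omega
    have := Nat.mul_lt_mul_of_pos_right hr hL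
    omega
  · show h (seg t' 0 (n + 0 * L)) = s
    have h0 : n + 0 * L = n := by ring
    rw [h0, hpre]
  · intro r
    show h (seg t' (n + r * L) (n + (r+1) * L)) = e
    rw [hblkr r]
    exact hblkE
  · exact hee

/-- Glue a sequence of path fragments along boundaries into an infinite path. -/
lemma glue_path {S : Type} (δr : S → S → Prop) (B : ℕ → ℕ) (hB : StrictMono B)
    (hB0 : B 0 = 0) (qs : ℕ → S) (P : ℕ → ℕ → S)
    (hP0 : ∀ r, P r 0 = qs r) (hPend : ∀ r, P r (B (r+1) - B r) = qs (r+1))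
    (hPδ : ∀ r i, i < B (r+1) - B r → δr (P r i) (P r (i+1))) :
    ∃ pp : ℕ → S, (∀ i, δr (pp i) (pp (i+1))) ∧
      ∀ r i, B r + i < B (r+1) → pp (B r + i) = P r i := by
  classical
  have hBge : ∀ n, n ≤ B n := fun n => by
    induction n with
    | zero => exact Nat.zero_le _
    | succ n ih => have := hB (show n < n + 1 by omega); omega
  have hex : ∀ i : ℕ, ∃ r, i < B (r+1) := fun i =>
    ⟨i + 1, lt_of_lt_of_le (by omega) (hBge (i+2))⟩
  set blk : ℕ → ℕ := fun i => Nat.find (hex i) with hblk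
  have hblk2 : ∀ i, i < B (blk i + 1) := fun i => Nat.find_spec (hex i)
  have hblk1 : ∀ i, B (blk i) ≤ i := by
    intro i
    rcases Nat.eq_zero_or_pos (blk i) with h | h
    · rw [h, hB0]; exact Nat.zero_le _
    · have := Nat.find_min (hex i) (show blk i - 1 < blk i by omega)
      push_neg at this
      have h2 : blk i - 1 + 1 = blk i := by omega
      rwa [h2] at this
  set pp : ℕ → S := fun i => P (blk i) (i - B (blk i)) with hpp
  have hkey : ∀ r i, B r + i < B (r+1) → pp (B r + i) = P r i := by
    intro r i hri
    have hblkeq : blk (B r + i) = r := by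
      apply le_antisymm
      · exact Nat.find_le hri
      · by_contra hc
        push_neg at hc
        have h1 : blk (B r + i) + 1 ≤ r := hc
        have h2 : B (blk (B r + i) + 1) ≤ B r := hB.le_iff_le.mpr h1
        have := hblk2 (B r + i)
        omega
    show P (blk (B r + i)) (B r + i - B (blk (B r + i))) = P r i
    rw [hblkeq]
    congr 1
    omega
  refine ⟨pp, ?_, hkey⟩
  intro i
  set r := blk i with hrdef
  set k := i - B r with hkdef
  have hr1 : B r ≤ i := hblk1 i
  have hr2 : i < B (r+1) := hblk2 i
  have hik : i = B r + k := by omega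
  have hklen : k < B (r+1) - B r := by omega
  have hppi : pp i = P r k := by rw [hik]; exact hkey r k (by omega)
  rcases Nat.lt_or_ge (i+1) (B (r+1)) with hc | hc
  · have : pp (i+1) = P r (k+1) := by
      rw [show i + 1 = B r + (k+1) by omega]
      exact hkey r (k+1) (by omega)
    rw [hppi, this]
    exact hPδ r k hklen
  · have hc2 : i + 1 = B (r+1) := by omega
    have hend : k + 1 = B (r+1) - B r := by omega
    have : pp (i+1) = P (r+1) 0 := by
      rw [show i + 1 = B (r+1) + 0 by omega]
      apply hkey (r+1) 0
      have := hB (show r + 1 < r + 1 + 1 by omega)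
      omega
    rw [hppi, this, hP0, ← hPend r, ← hend]
    exact hPδ r k hklen

/-- Zip a finite word with the Kripke labels along a path fragment. -/
def zipP {S α β δ : Type} (K : Kripke S α) (f : β → Set α → δ) :
    List β → (ℕ → S) → List δ
  | [], _ => []
  | b :: l, p => f b (K.L (p 0)) :: zipP K f l (fun i => p (i+1))

lemma zipP_congr {S α β δ : Type} (K : Kripke S α) (f : β → Set α → δ) :
    ∀ (l : List β) (p p' : ℕ → S), (∀ i, i < l.length → p i = p' i) →
      zipP K f l p = zipP K f l p' := by
  intro l
  induction l with
  | nil => intro p p' _; rfl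
  | cons b l ih =>
    intro p p' hag
    show f b (K.L (p 0)) :: zipP K f l (fun i => p (i+1)) =
      f b (K.L (p' 0)) :: zipP K f l (fun i => p' (i+1))
    rw [hag 0 (by simp)]
    rw [ih (fun i => p (i+1)) (fun i => p' (i+1)) (fun i hi => hag (i+1) (by simp; omega))]

lemma zipP_append {S α β δ : Type} (K : Kripke S α) (f : β → Set α → δ) :
    ∀ (l₁ l₂ : List β) (p : ℕ → S),
      zipP K f (l₁ ++ l₂) p = zipP K f l₁ p ++ zipP K f l₂ (fun i => p (i + l₁.length)) := by
  intro l₁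
  induction l₁ with
  | nil =>
    intro l₂ p
    show zipP K f l₂ p = zipP K f l₂ (fun i => p (i + 0))
    apply zipP_congr
    intro i _
    rw [Nat.add_zero]
  | cons b l ih =>
    intro l₂ p
    show f b (K.L (p 0)) :: zipP K f (l ++ l₂) (fun i => p (i+1)) = _
    rw [ih l₂ (fun i => p (i+1))]
    show f b (K.L (p 0)) :: (zipP K f l (fun i => p (i+1)) ++
        zipP K f l₂ (fun i => p (i + l.length + 1))) =
      f b (K.L (p 0)) :: (zipP K f l (fun i => p (i+1)) ++
        zipP K f l₂ (fun i => p (i + (b :: l).length)))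
    rfl

lemma zipP_seg {S α β δ : Type} (K : Kripke S α) (f : β → Set α → δ)
    (u : ℕ → β) (p : ℕ → S) :
    ∀ (d i : ℕ), zipP K f (seg u i (i + d)) (fun m => p (i + m)) =
      seg (fun m => f (u m) (K.L (p m))) i (i + d) := by
  intro d
  induction d with
  | zero => intro i; simp [zipP]
  | succ d ih =>
    intro i
    rw [seg_cons u (by omega : i < i + (d+1)), seg_cons _ (by omega : i < i + (d+1))]
    show f (u i) (K.L (p (i + 0))) ::
        zipP K f (seg u (i+1) (i + (d+1))) (fun m => p (i + (m+1))) = _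
    rw [show i + 0 = i by omega]
    congr 1
    have heq : i + (d + 1) = (i+1) + d := by omega
    rw [heq]
    have := ih (i+1)
    rw [show (fun m => p (i + (m+1))) = (fun m => p ((i+1) + m)) from
      funext fun m => by congr 1; omega]
    exact this

/-- Powerset-with-states transition types for projection over a Kripke structure. -/
def hP {S α β δ M : Type} (K : Kripke S α) (f : β → Set α → δ) (h : List δ → M)
    (l : List β) : S → S → M → Prop :=
  fun q q' m => ∃ p : ℕ → S, p 0 = q ∧ p l.length = q' ∧
    (∀ i, i < l.length → K.delta (p i) (p (i+1))) ∧ h (zipP K f l p) = m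

def mulP {S M : Type} (mul : M → M → M) (A B : S → S → M → Prop) : S → S → M → Prop :=
  fun q q'' m => ∃ q' m₁ m₂, A q q' m₁ ∧ B q' q'' m₂ ∧ m = mul m₁ m₂

lemma hP_hom {S α β δ M : Type} (K : Kripke S α) (f : β → Set α → δ)
    (h : List δ → M) (mul : M → M → M)
    (hom : ∀ l₁ l₂ : List δ, h (l₁ ++ l₂) = mul (h l₁) (h l₂)) (l₁ l₂ : List β) :
    hP K f h (l₁ ++ l₂) = mulP mul (hP K f h l₁) (hP K f h l₂) := by
  funext q q'' m
  apply propext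
  constructor
  · rintro ⟨p, h0, hend, hδ, hm⟩
    refine ⟨p l₁.length, h (zipP K f l₁ p), h (zipP K f l₂ (fun i => p (i + l₁.length))),
      ⟨p, h0, rfl, fun i hi => hδ i (by simp; omega), rfl⟩,
      ⟨fun i => p (i + l₁.length), by show p (0 + l₁.length) = p l₁.length; rw [Nat.zero_add],
        ?_, ?_, rfl⟩, ?_⟩
    · show p (l₂.length + l₁.length) = q''
      have hlen : l₂.length + l₁.length = (l₁ ++ l₂).length := by simp [Nat.add_comm]
      rw [hlen]
      exact hend
    · intro i hi
      show K.delta (p (i + l₁.length)) (p (i + 1 + l₁.length))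
      have h3 : i + 1 + l₁.length = (i + l₁.length) + 1 := by omega
      rw [h3]
      exact hδ _ (by simp; omega)
    · rw [← hm, zipP_append, hom]
  · rintro ⟨q', m₁, m₂, ⟨p₁, h01, hend1, hδ1, hm1⟩, ⟨p₂, h02, hend2, hδ2, hm2⟩, rfl⟩
    set p : ℕ → S := fun i => if i < l₁.length then p₁ i else p₂ (i - l₁.length) with hpdef
    have hpb : ∀ i, l₁.length ≤ i → p i = p₂ (i - l₁.length) := fun i hi => if_neg (by omega)
    have hbdry : p l₁.length = q' := by rw [hpb _ le_rfl, Nat.sub_self, h02]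
    have hp1all : ∀ i, i ≤ l₁.length → p i = p₁ i := by
      intro i hi
      rcases Nat.lt_or_ge i l₁.length with hc | hc
      · exact if_pos hc
      · have : i = l₁.length := by omega
        subst this
        rw [hbdry, ← hend1]
    refine ⟨p, by rw [hp1all 0 (Nat.zero_le _)]; exact h01, ?_, ?_, ?_⟩
    · show p (l₁ ++ l₂).length = q''
      rw [hpb _ (by simp)]
      simp only [List.length_append]
      rw [show l₁.length + l₂.length - l₁.length = l₂.length by omega]
      exact hend2
    · intro i hi
      simp only [List.length_append] at hi
      rcases Nat.lt_or_ge i l₁.length with hc | hc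
      · rw [hp1all i (by omega), hp1all (i+1) (by omega)]
        exact hδ1 i hc
      · rw [hpb i hc, hpb (i+1) (by omega)]
        rw [show i + 1 - l₁.length = (i - l₁.length) + 1 by omega]
        exact hδ2 _ (by omega)
    · rw [zipP_append, hom]
      congr 1
      · rw [← hm1]
        congr 1
        apply zipP_congr
        intro i hi
        exact hp1all i (le_of_lt hi)
      · rw [← hm2]
        congr 1
        apply zipP_congr
        intro i hi
        show p (i + l₁.length) = p₂ i
        rw [hpb _ (by omega)]
        congr 1
        omega

/-- Goodness is preserved by existential quantification over the traces of a
finite Kripke structure. -/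
theorem goodW_proj {S α β δ : Type} [Finite S] (K : Kripke S α) (f : β → Set α → δ)
    (G : (ℕ → δ) → Prop) (hG : GoodW G) :
    GoodW (fun u : ℕ → β => ∃ t, t ∈ K.Traces ∧ G (fun i => f (u i) (t i))) := by
  classical
  obtain ⟨M, fM, mul, h, hom, sat⟩ := hG
  refine ⟨S → S → M → Prop, inferInstance, mulP mul, hP K f h, hP_hom K f h mul hom, ?_⟩
  suffices hdir : ∀ u u' : ℕ → β, ∀ s' e', Fact (hP K f h) u s' e' → Fact (hP K f h) u' s' e' →
      (∃ t, t ∈ K.Traces ∧ G (fun i => f (u i) (t i))) →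
      (∃ t, t ∈ K.Traces ∧ G (fun i => f (u' i) (t i))) by
    intro u u' s' e' h1 h2
    exact ⟨hdir u u' s' e' h1 h2, hdir u' u s' e' h2 h1⟩
  rintro u u' s' e' ⟨I, hI, hIs, hIb⟩ ⟨J, hJ, hJs, hJb⟩ ⟨t, ⟨p, ⟨hp0, hpδ⟩, hlab⟩, hGt⟩
  set z : ℕ → δ := fun i => f (u i) (K.L (p i)) with hzdef
  have hzt : (fun i => f (u i) (t i)) = z := funext fun i => by rw [hlab i]
  rw [hzt] at hGt
  obtain ⟨g, ⟨qs, s₁, e₁⟩, hg, hmono⟩ := ramsey_pairs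
    (C := S × M × M)
    (fun a b => (p (I (a+1)), h (seg z 0 (I (a+1))), h (seg z (I (a+1)) (I (b+1)))))
  set Istar : ℕ → ℕ := fun a => I (g a + 1) with hIstar
  have hIstarMono : StrictMono Istar := by
    intro a b hab
    exact hI (by have := hg hab; omega)
  have hq : ∀ a, p (Istar a) = qs := fun a =>
    congrArg (fun x => x.1) (hmono a (a+1) (by omega))
  have hpre1 : ∀ a, h (seg z 0 (Istar a)) = s₁ := fun a =>
    congrArg (fun x => x.2.1) (hmono a (a+1) (by omega))
  have hblk1 : ∀ a b, a < b → h (seg z (Istar a) (Istar b)) = e₁ := fun a b hab =>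
    congrArg (fun x => x.2.2) (hmono a b hab)
  have he₁ : mul e₁ e₁ = e₁ := by
    have h01 := hblk1 0 1 (by omega)
    have h12 := hblk1 1 2 (by omega)
    have h02 := hblk1 0 2 (by omega)
    have hsp : seg z (Istar 0) (Istar 1) ++ seg z (Istar 1) (Istar 2) =
        seg z (Istar 0) (Istar 2) :=
      seg_append z (le_of_lt (hIstarMono (by omega))) (le_of_lt (hIstarMono (by omega)))
    have hx : h (seg z (Istar 0) (Istar 2)) = mul e₁ e₁ := by
      rw [← hsp, hom, h01, h12]
    rw [← hx]
    exact h02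
  have hfactz : Fact h z s₁ e₁ := ⟨Istar, hIstarMono, hpre1 0, hblk1⟩
  -- membership facts
  have hmem_pre : hP K f h (seg u 0 (Istar 0)) (p 0) qs s₁ := by
    refine ⟨p, rfl, ?_, ?_, ?_⟩
    · rw [seg_len]
      rw [Nat.sub_zero]
      exact hq 0
    · intro i _
      exact hpδ i
    · have hz1 := zipP_seg K f u p (Istar 0) 0
      rw [Nat.zero_add] at hz1
      have hz2 : zipP K f (seg u 0 (Istar 0)) p =
          zipP K f (seg u 0 (Istar 0)) (fun m => p (0 + m)) := by
        apply zipP_congr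
        intro i _
        rw [Nat.zero_add]
      rw [hz2, hz1]
      exact hpre1 0
  have hmem_blk : ∀ a b, a < b → hP K f h (seg u (Istar a) (Istar b)) qs qs e₁ := by
    intro a b hab
    refine ⟨fun m => p (Istar a + m),
      by show p (Istar a + 0) = qs; rw [Nat.add_zero]; exact hq a, ?_, ?_, ?_⟩
    · rw [seg_len]
      show p (Istar a + (Istar b - Istar a)) = qs
      have : Istar a + (Istar b - Istar a) = Istar b := by
        have := hIstarMono hab
        omega
      rw [this]
      exact hq b
    · intro i _
      show K.delta (p (Istar a + i)) (p (Istar a + (i+1)))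
      rw [show Istar a + (i+1) = (Istar a + i) + 1 by omega]
      exact hpδ _
    · have hd : Istar b = Istar a + (Istar b - Istar a) := by
        have := hIstarMono hab
        omega
      rw [hd]
      rw [zipP_seg K f u p (Istar b - Istar a) (Istar a)]
      rw [← hd]
      exact hblk1 a b hab
  -- same prefix/block types for u'
  have hPpre_u : hP K f h (seg u 0 (Istar 0)) = mulP mul s' e' := by
    have hsp : seg u 0 (I 0) ++ seg u (I 0) (Istar 0) = seg u 0 (Istar 0) :=
      seg_append u (Nat.zero_le _) (le_of_lt (hI (by omega : 0 < g 0 + 1)))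
    rw [← hsp, hP_hom K f h mul hom, hIs, hIb 0 (g 0 + 1) (by omega)]
  have hPpre_u' : hP K f h (seg u' 0 (J (g 0 + 1))) = mulP mul s' e' := by
    have hsp : seg u' 0 (J 0) ++ seg u' (J 0) (J (g 0 + 1)) = seg u' 0 (J (g 0 + 1)) :=
      seg_append u' (Nat.zero_le _) (le_of_lt (hJ (by omega : 0 < g 0 + 1)))
    rw [← hsp, hP_hom K f h mul hom, hJs, hJb 0 (g 0 + 1) (by omega)]
  have hmem_pre' : hP K f h (seg u' 0 (J (g 0 + 1))) (p 0) qs s₁ := by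
    rw [hPpre_u', ← hPpre_u]
    exact hmem_pre
  have hmem_e' : ∀ r r', r < r' → hP K f h (seg u' (J r) (J r')) qs qs e₁ := by
    intro r r' hrr'
    rw [hJb r r' hrr', ← hIb (g 0 + 1) (g 1 + 1) (by have := hg (show 0 < 1 by omega); omega)]
    exact hmem_blk 0 1 (by omega)
  -- glue fragments along u'
  set B : ℕ → ℕ := fun r => if r = 0 then 0 else J (g 0 + r) with hBdef
  have hB0 : B 0 = 0 := rfl
  have hBpos : ∀ r : ℕ, r ≠ 0 → B r = J (g 0 + r) := by
    intro r hr
    show (if r = 0 then 0 else J (g 0 + r)) = J (g 0 + r)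
    rw [if_neg hr]
  have hBmono : StrictMono B := by
    intro a b hab
    rcases Nat.eq_zero_or_pos a with ha | ha
    · subst ha
      show B 0 < B b
      rw [hB0, hBpos b (by omega)]
      have h1 : J 0 < J (g 0 + b) := hJ (by omega)
      omega
    · rw [hBpos a (by omega), hBpos b (by omega)]
      exact hJ (by omega)
  set qv : ℕ → S := fun r => if r = 0 then p 0 else qs with hqv
  set mval : ℕ → M := fun r => if r = 0 then s₁ else e₁ with hmval
  have hfam : ∀ r, ∃ pf : ℕ → S, pf 0 = qv r ∧ pf (B (r+1) - B r) = qs ∧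
      (∀ i, i < B (r+1) - B r → K.delta (pf i) (pf (i+1))) ∧
      h (zipP K f (seg u' (B r) (B (r+1))) pf) = mval r := by
    intro r
    have hB1 : B (r+1) = J (g 0 + (r+1)) := hBpos (r+1) (Nat.succ_ne_zero r)
    rcases Nat.eq_zero_or_pos r with hr | hr
    · subst hr
      obtain ⟨pf, h1, h2, h3, h4⟩ := hmem_pre'
      rw [seg_len] at h2 h3
      have hg01 : g 0 + (0 + 1) = g 0 + 1 := by omega
      refine ⟨pf, by rw [h1]; show p 0 = qv 0; simp [hqv], ?_, ?_, ?_⟩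
      · rw [hB0, hB1, hg01, Nat.sub_zero]
        rw [Nat.sub_zero] at h2
        exact h2
      · intro i hi
        rw [hB0, hB1, hg01, Nat.sub_zero] at hi
        apply h3
        omega
      · rw [hB0, hB1, hg01]
        show h _ = mval 0
        simp only [hmval, if_pos rfl]
        exact h4
    · have hrne : r ≠ 0 := by omega
      have hB2 : B r = J (g 0 + r) := hBpos r hrne
      obtain ⟨pf, h1, h2, h3, h4⟩ := hmem_e' (g 0 + r) (g 0 + (r+1)) (by omega)
      rw [seg_len] at h2 h3
      refine ⟨pf, ?_, ?_, ?_, ?_⟩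
      · rw [h1]
        show qs = qv r
        simp [hqv, hrne]
      · rw [hB1, hB2]
        exact h2
      · intro i hi
        rw [hB1, hB2] at hi
        exact h3 i hi
      · rw [hB1, hB2]
        show h _ = mval r
        simp only [hmval, if_neg hrne]
        exact h4
  choose Pf hPf0 hPfend hPfδ hPfh using hfam
  obtain ⟨pp, hppδ, hppkey⟩ := glue_path K.delta B hBmono hB0 qv Pf hPf0
    (fun r => by rw [hPfend r]; show qs = qv (r+1); simp [hqv]) hPfδ
  have hpp0 : pp 0 = p 0 := by
    have hb01 : B (0+1) = B 1 := rfl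
    have hB1pos : 0 < B 1 := by
      rw [hBpos 1 one_ne_zero]
      have h1 : J 0 < J (g 0 + 1) := hJ (by omega)
      omega
    have h2 := hppkey 0 0 (by omega)
    rw [hB0] at h2
    norm_num at h2
    rw [h2, hPf0]
    show qv 0 = p 0
    simp [hqv]
  refine ⟨fun i => K.L (pp i), ⟨pp, ⟨by rw [hpp0]; exact hp0, hppδ⟩, fun i => rfl⟩, ?_⟩
  set z' : ℕ → δ := fun i => f (u' i) (K.L (pp i)) with hz'def
  show G z'
  have hfactz' : Fact h z' s₁ e₁ := by
    apply fact_of_consecutive hom (I := fun r => B (r+1))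
    · intro a b hab
      exact hBmono (by omega)
    · show h (seg z' 0 (B (0+1))) = s₁
      have hb01 : B (0+1) = B 1 := rfl
      have hz1 := zipP_seg K f u' pp (B (0+1)) 0
      rw [Nat.zero_add] at hz1
      rw [← hz1]
      have hagree : zipP K f (seg u' 0 (B (0+1))) (fun m => pp (0 + m)) =
          zipP K f (seg u' 0 (B (0+1))) (Pf 0) := by
        apply zipP_congr
        intro i hi
        rw [seg_len, Nat.sub_zero] at hi
        show pp (0 + i) = Pf 0 i
        have hk := hppkey 0 i (by rw [hB0]; omega)
        rw [hB0] at hk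
        rw [Nat.zero_add] at hk ⊢
        exact hk
      rw [hagree]
      have h4 := hPfh 0
      rw [hB0] at h4
      simpa only [hmval, if_pos rfl] using h4
    · intro r
      show h (seg z' (B (r+1)) (B (r+1+1))) = e₁
      have hle : B (r+1) ≤ B (r+1+1) := le_of_lt (hBmono (by omega))
      have hd : B (r+1+1) = B (r+1) + (B (r+1+1) - B (r+1)) := by omega
      rw [hd]
      rw [← zipP_seg K f u' pp (B (r+1+1) - B (r+1)) (B (r+1))]
      have hagree : zipP K f (seg u' (B (r+1)) (B (r+1) + (B (r+1+1) - B (r+1))))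
          (fun m => pp (B (r+1) + m)) =
          zipP K f (seg u' (B (r+1)) (B (r+1) + (B (r+1+1) - B (r+1)))) (Pf (r+1)) := by
        apply zipP_congr
        intro i hi
        rw [seg_len] at hi
        exact hppkey (r+1) i (by omega)
      rw [hagree, ← hd]
      have h4 := hPfh (r+1)
      simpa only [hmval, if_neg (Nat.succ_ne_zero r)] using h4
    · exact he₁
  have := sat z z' s₁ e₁ hfactz hfactz'
  exact this.mp hGt

/-- Goodness is preserved by universal quantification over the traces of a
finite Kripke structure. -/
theorem goodW_proj_all {S α β δ : Type} [Finite S] (K : Kripke S α) (f : β → Set α → δ)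
    (G : (ℕ → δ) → Prop) (hG : GoodW G) :
    GoodW (fun u : ℕ → β => ∀ t, t ∈ K.Traces → G (fun i => f (u i) (t i))) := by
  have h1 := ((goodW_proj K f (fun v => ¬ G v) hG.not).not)
  apply h1.congr
  intro u
  constructor
  · intro hn t ht
    by_contra hc
    exact hn ⟨t, ht, hc⟩
  · rintro hall ⟨t, ht, hc⟩
    exact hc (hall t ht)

/-- Zip a finite word with values of a fixed trace driven by a position automaton. -/
def zipT {α β δ : Type} (f : β → Set α → δ) (t : ℕ → Set α) (stp : ℕ → ℕ) :
    ℕ → List β → List δ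
  | _, [] => []
  | c, b :: l => f b (t c) :: zipT f t stp (stp c) l

lemma zipT_append {α β δ : Type} (f : β → Set α → δ) (t : ℕ → Set α) (stp : ℕ → ℕ) :
    ∀ (l₁ l₂ : List β) (c : ℕ),
      zipT f t stp c (l₁ ++ l₂) = zipT f t stp c l₁ ++ zipT f t stp (stp^[l₁.length] c) l₂ := by
  intro l₁
  induction l₁ with
  | nil =>
    intro l₂ c
    show zipT f t stp c l₂ = zipT f t stp (stp^[0] c) l₂
    rw [Function.iterate_zero_apply]
  | cons b l ih =>
    intro l₂ c
    show f b (t c) :: zipT f t stp (stp c) (l ++ l₂) = _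
    rw [ih l₂ (stp c)]
    rfl

lemma zipT_seg {α β δ : Type} (f : β → Set α → δ) (t : ℕ → Set α) (stp cls : ℕ → ℕ)
    (hstep : ∀ i, cls (i+1) = stp (cls i)) (ht : ∀ i, t (cls i) = t i) (u : ℕ → β) :
    ∀ (d i : ℕ), zipT f t stp (cls i) (seg u i (i + d)) =
      seg (fun m => f (u m) (t m)) i (i + d) := by
  intro d
  induction d with
  | zero => intro i; simp [zipT]
  | succ d ih =>
    intro i
    rw [seg_cons u (by omega : i < i + (d+1)), seg_cons _ (by omega : i < i + (d+1))]
    show f (u i) (t (cls i)) :: zipT f t stp (stp (cls i)) (seg u (i+1) (i + (d+1))) = _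
    rw [ht i, ← hstep i]
    congr 1
    have heq : i + (d+1) = (i+1) + d := by omega
    rw [heq]
    exact ih (i+1)

/-- Goodness is preserved by fixing an ultimately periodic trace component. -/
theorem goodW_peel {α β δ : Type} (f : β → Set α → δ) (F : (ℕ → δ) → Prop)
    (hF : GoodW F) (t : ℕ → Set α) (hUP : UP t) :
    GoodW (fun u : ℕ → β => F (fun i => f (u i) (t i))) := by
  classical
  obtain ⟨M, fM, mul, h, hom, sat⟩ := hF
  obtain ⟨N, P, hP, hper⟩ := hUP
  set Q := N + P with hQdef
  have hQpos : 0 < Q := by omega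
  set stp : ℕ → ℕ := fun c => if c + 1 < Q then c + 1 else N with hstp
  set cls : ℕ → ℕ := fun i => if i < Q then i else N + (i - N) % P with hclsdef
  have hclsQ : ∀ i, cls i < Q := by
    intro i
    show (if i < Q then i else N + (i - N) % P) < Q
    split
    · omega
    · have : (i - N) % P < P := Nat.mod_lt _ hP
      omega
  have hstpQ : ∀ c, c < Q → stp c < Q := by
    intro c hc
    show (if c + 1 < Q then c + 1 else N) < Q
    split
    · omega
    · omega
  have hiterQ : ∀ n c, c < Q → stp^[n] c < Q := by
    intro n
    induction n with
    | zero => intro c hc; rwa [Function.iterate_zero_apply]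
    | succ n ih =>
      intro c hc
      rw [Function.iterate_succ_apply]
      exact ih _ (hstpQ c hc)
  have hcls0 : cls 0 = 0 := by
    show (if 0 < Q then 0 else N + (0 - N) % P) = 0
    rw [if_pos hQpos]
  have htmod : ∀ d, t (N + d % P) = t (N + d) := by
    intro d
    induction d using Nat.strong_induction_on with
    | _ d ih =>
      rcases Nat.lt_or_ge d P with hd | hd
      · rw [Nat.mod_eq_of_lt hd]
      · have h1 : t (N + d) = t (N + (d - P)) := by
          rw [show N + d = (N + (d - P)) + P by omega]
          exact hper _ (by omega)
        rw [h1, ← ih (d - P) (by omega)]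
        congr 1
        rw [Nat.mod_eq_sub_mod (by omega : P ≤ d)]
  have htcls : ∀ i, t (cls i) = t i := by
    intro i
    show t (if i < Q then i else N + (i - N) % P) = t i
    split
    · rfl
    · next hni =>
      rw [htmod (i - N)]
      have hni2 : N + (i - N) = i := by omega
      rw [hni2]
  have hclstep : ∀ i, cls (i+1) = stp (cls i) := by
    intro i
    rcases Nat.lt_or_ge (i+1) Q with h1 | h1
    · have hi : i < Q := by omega
      show (if i + 1 < Q then i + 1 else _) = stp (cls i)
      rw [if_pos h1]
      show _ = (if cls i + 1 < Q then cls i + 1 else N)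
      have : cls i = i := if_pos hi
      rw [this, if_pos h1]
    · rcases Nat.eq_or_lt_of_le h1 with h2 | h2
      · -- i + 1 = Q
        have hi : i < Q := by omega
        have hci : cls i = i := if_pos hi
        have hc1 : cls (i+1) = N + (i + 1 - N) % P := if_neg (by omega)
        rw [hc1, hci]
        show N + (i + 1 - N) % P = (if i + 1 < Q then i + 1 else N)
        rw [if_neg (by omega)]
        rw [show i + 1 - N = P by omega, Nat.mod_self, Nat.add_zero]
      · -- i ≥ Q
        have hci : cls i = N + (i - N) % P := if_neg (by omega)
        have hc1 : cls (i+1) = N + (i + 1 - N) % P := if_neg (by omega)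
        have hsub : i + 1 - N = (i - N) + 1 := by omega
        rcases mod_succ_cases (i - N) P hP with ⟨ha1, ha2⟩ | ⟨ha1, ha2⟩
        · rw [hc1, hsub, ha1, hci]
          show _ = (if N + (i - N) % P + 1 < Q then N + (i - N) % P + 1 else N)
          rw [if_pos (by omega)]
          omega
        · rw [hc1, hsub, ha1, hci]
          show _ = (if N + (i - N) % P + 1 < Q then N + (i - N) % P + 1 else N)
          rw [if_neg (by omega)]
          omega
  have hclsA : ∀ i n, stp^[n] (cls i) = cls (i + n) := by
    intro i n
    induction n with
    | zero => rw [Function.iterate_zero_apply, Nat.add_zero]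
    | succ n ih =>
      rw [Function.iterate_succ_apply', ih, ← hclstep (i + n)]
      congr 1
  -- the enriched type map
  set h' : List β → (Fin Q → M × Fin Q) := fun l c =>
    (h (zipT f t stp c.val l), ⟨stp^[l.length] c.val, hiterQ l.length c.val c.isLt⟩)
    with hh'
  set mul' : (Fin Q → M × Fin Q) → (Fin Q → M × Fin Q) → (Fin Q → M × Fin Q) :=
    fun m₁ m₂ c => (mul (m₁ c).1 ((m₂ (m₁ c).2).1), (m₂ (m₁ c).2).2) with hmul'
  have hom' : ∀ l₁ l₂ : List β, h' (l₁ ++ l₂) = mul' (h' l₁) (h' l₂) := by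
    intro l₁ l₂
    funext c
    refine Prod.ext ?_ ?_
    · show h (zipT f t stp c.val (l₁ ++ l₂)) = mul (h (zipT f t stp c.val l₁)) _
      rw [zipT_append, hom]
    · apply Fin.ext
      show stp^[(l₁ ++ l₂).length] c.val = stp^[l₂.length] (stp^[l₁.length] c.val)
      rw [List.length_append, Nat.add_comm, Function.iterate_add_apply]
  refine ⟨Fin Q → M × Fin Q, inferInstance, mul', h', hom', ?_⟩
  intro u u' s' e' hu hu'
  set cz : Fin Q := ⟨0, hQpos⟩ with hcz
  set c₀ : Fin Q := (s' cz).2 with hc₀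
  set c₁ : Fin Q := (e' c₀).2 with hc₁
  set sval : M := mul ((s' cz).1) ((e' c₀).1) with hsval
  set eval : M := (e' c₁).1 with heval
  have transfer : ∀ (v : ℕ → β), Fact h' v s' e' →
      Fact h (fun i => f (v i) (t i)) sval eval := by
    rintro v ⟨I, hI, hIs, hIb⟩
    set z : ℕ → δ := fun i => f (v i) (t i) with hz
    have hseg : ∀ i d, h' (seg v i (i + d)) ⟨cls i, hclsQ i⟩ =
        (h (seg z i (i + d)), ⟨cls (i + d), hclsQ _⟩) := by
      intro i d
      refine Prod.ext ?_ ?_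
      · show h (zipT f t stp (cls i) (seg v i (i + d))) = h (seg z i (i + d))
        rw [zipT_seg f t stp cls hclstep htcls v d i]
      · apply Fin.ext
        show stp^[(seg v i (i + d)).length] (cls i) = cls (i + d)
        rw [seg_len, show i + d - i = d by omega]
        exact hclsA i d
    have hseg' : ∀ i j, i ≤ j → h' (seg v i j) ⟨cls i, hclsQ i⟩ =
        (h (seg z i j), ⟨cls j, hclsQ _⟩) := by
      intro i j hij
      have := hseg i (j - i)
      rwa [show i + (j - i) = j by omega] at this
    have hc0eq : c₀ = ⟨cls (I 0), hclsQ _⟩ := by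
      rw [hc₀, ← hIs]
      have hz0 : cz = ⟨cls 0, hclsQ 0⟩ := by apply Fin.ext; show 0 = cls 0; rw [hcls0]
      rw [hz0, hseg' 0 (I 0) (Nat.zero_le _)]
    have hc1eq : c₁ = ⟨cls (I 1), hclsQ _⟩ := by
      rw [hc₁, ← hIb 0 1 (by omega), hc0eq,
        hseg' (I 0) (I 1) (le_of_lt (hI (by omega)))]
    have hcfix : (e' c₁).2 = c₁ := by
      have h1 : (e' c₀).2 = ⟨cls (I 2), hclsQ _⟩ := by
        rw [← hIb 0 2 (by omega), hc0eq, hseg' (I 0) (I 2) (le_of_lt (hI (by omega)))]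
      have h2 : (e' c₁).2 = ⟨cls (I 2), hclsQ _⟩ := by
        rw [← hIb 1 2 (by omega), hc1eq, hseg' (I 1) (I 2) (le_of_lt (hI (by omega)))]
      rw [h2, ← h1, ← hc₁]
    have hclsall : ∀ r, (⟨cls (I (r+1)), hclsQ _⟩ : Fin Q) = c₁ := by
      intro r
      induction r with
      | zero => exact hc1eq.symm
      | succ r ih =>
        have h1 : (⟨cls (I (r+2)), hclsQ _⟩ : Fin Q) = (e' ⟨cls (I (r+1)), hclsQ _⟩).2 := by
          rw [← hIb (r+1) (r+2) (by omega),
            hseg' (I (r+1)) (I (r+2)) (le_of_lt (hI (by omega)))]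
        rw [h1, ih, hcfix]
    refine ⟨fun r => I (r+1), fun a b hab => hI (by omega), ?_, ?_⟩
    · -- prefix
      have hsp : seg v 0 (I 0) ++ seg v (I 0) (I 1) = seg v 0 (I 1) :=
        seg_append v (Nat.zero_le _) (le_of_lt (hI (by omega)))
      have h1 : h' (seg v 0 (I 1)) = mul' s' e' := by
        rw [← hsp, hom', hIs, hIb 0 1 (by omega)]
      have h2 := hseg' 0 (I 1) (Nat.zero_le _)
      have hz0 : (⟨cls 0, hclsQ 0⟩ : Fin Q) = cz := by
        apply Fin.ext; show cls 0 = 0; rw [hcls0]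
      rw [hz0] at h2
      rw [h1] at h2
      have h3 : (mul' s' e' cz).1 = h (seg z 0 (I 1)) := congrArg Prod.fst h2
      show h (seg z 0 (I (0+1))) = sval
      rw [show (0:ℕ)+1 = 1 by omega, ← h3]

    · -- blocks
      intro r r' hrr'
      have h2 := hseg' (I (r+1)) (I (r'+1)) (le_of_lt (hI (by omega)))
      rw [hIb (r+1) (r'+1) (by omega)] at h2
      have h3 : (e' ⟨cls (I (r+1)), hclsQ _⟩).1 = h (seg z (I (r+1)) (I (r'+1))) :=
        congrArg Prod.fst h2
      show h (seg z (I (r+1)) (I (r'+1))) = eval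
      rw [← h3, hclsall r, heval]
  have hfz := transfer u hu
  have hfz' := transfer u' hu'
  exact sat _ _ sval eval hfz hfz'

lemma hyperSat_succ_ex {α : Type} {k : ℕ} (Q : Fin (k+1) → Quant)
    (T : Fin (k+1) → Set (ℕ → Set α)) (P : (Fin (k+1) → (ℕ → Set α)) → Prop)
    (hQ : Q 0 = .ex) :
    HyperSat (k+1) Q T P ↔ ∃ t ∈ T 0, HyperSat k (fun j => Q j.succ) (fun j => T j.succ)
      (fun ts => P (Fin.cons t ts)) := by
  have h1 : HyperSat (k+1) Q T P = match Q 0 with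
      | .ex => ∃ t ∈ T 0, HyperSat k (fun j => Q j.succ) (fun j => T j.succ)
          (fun ts => P (Fin.cons t ts))
      | .all => ∀ t ∈ T 0, HyperSat k (fun j => Q j.succ) (fun j => T j.succ)
          (fun ts => P (Fin.cons t ts)) := rfl
  rw [h1, hQ]

lemma hyperSat_succ_all {α : Type} {k : ℕ} (Q : Fin (k+1) → Quant)
    (T : Fin (k+1) → Set (ℕ → Set α)) (P : (Fin (k+1) → (ℕ → Set α)) → Prop)
    (hQ : Q 0 = .all) :
    HyperSat (k+1) Q T P ↔ ∀ t ∈ T 0, HyperSat k (fun j => Q j.succ) (fun j => T j.succ)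
      (fun ts => P (Fin.cons t ts)) := by
  have h1 : HyperSat (k+1) Q T P = match Q 0 with
      | .ex => ∃ t ∈ T 0, HyperSat k (fun j => Q j.succ) (fun j => T j.succ)
          (fun ts => P (Fin.cons t ts))
      | .all => ∀ t ∈ T 0, HyperSat k (fun j => Q j.succ) (fun j => T j.succ)
          (fun ts => P (Fin.cons t ts)) := rfl
  rw [h1, hQ]

/-- Goodness of the inner HyperLTL formula as a predicate of the free context word. -/
theorem GPmain {α : Type} : ∀ (k : ℕ) {σ : Fin k → Type} [inst : ∀ j, Finite (σ j)]
    (K : ∀ j, Kripke (σ j) α) (Q : Fin k → Quant) {β : Type}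
    (R : (ℕ → β) → (Fin k → (ℕ → Set α)) → Prop),
    GoodW (fun zW : ℕ → β × (Fin k → Set α) =>
      R (fun i => (zW i).1) (fun j i => (zW i).2 j)) →
    GoodW (fun c : ℕ → β => HyperSat k Q (fun j => (K j).Traces) (R c)) := by
  intro k
  induction k with
  | zero =>
    intro σ inst K Q β R hR
    have h2 := hR.comap (fun b : β => ((b, fun j => Fin.elim0 j) : β × (Fin 0 → Set α)))
    apply h2.congr
    intro c
    show R (fun i => c i) (fun j i => Fin.elim0 j) ↔ R c (fun j => j.elim0)
    have he : (fun (j : Fin 0) (i : ℕ) => (Fin.elim0 j : Set α)) =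
        (fun j : Fin 0 => (j.elim0 : ℕ → Set α)) := funext fun j => j.elim0
    rw [he]
  | succ k ih =>
    intro σ inst K Q β R hR
    set R' : (ℕ → β × Set α) → (Fin k → (ℕ → Set α)) → Prop :=
      fun c' ts => R (fun i => (c' i).1) (Fin.cons (fun i => (c' i).2) ts) with hR'def
    have hJ' : GoodW (fun zW : ℕ → (β × Set α) × (Fin k → Set α) =>
        R' (fun i => (zW i).1) (fun j i => (zW i).2 j)) := by
      have h2 := hR.comap (fun x : (β × Set α) × (Fin k → Set α) =>
        ((x.1.1, Fin.cons x.1.2 x.2) : β × (Fin (k+1) → Set α)))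
      apply h2.congr
      intro zW
      show R (fun i => (zW i).1.1)
          (fun j i => (Fin.cons (zW i).1.2 (zW i).2 : Fin (k+1) → Set α) j) ↔
        R (fun i => (zW i).1.1)
          (Fin.cons (fun i => (zW i).1.2) (fun j i => (zW i).2 j))
      have he : (fun (j : Fin (k+1)) (i : ℕ) =>
          (Fin.cons (zW i).1.2 (zW i).2 : Fin (k+1) → Set α) j) =
          (Fin.cons (fun i => (zW i).1.2) (fun (j : Fin k) (i : ℕ) => (zW i).2 j) :
            Fin (k+1) → ℕ → Set α) := by
        funext j
        refine Fin.cases ?_ ?_ j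
        · funext i; simp
        · intro j'; funext i; simp
      rw [he]
    have hInner := ih (fun j => K j.succ) (fun j => Q j.succ) R' hJ'
    cases hQ : Q 0 with
    | ex =>
      have hproj := goodW_proj (K 0)
        (fun (b : β) (a : Set α) => ((b, a) : β × Set α))
        (fun c' => HyperSat k (fun j => Q j.succ) (fun j => (K j.succ).Traces) (R' c'))
        hInner
      apply hproj.congr
      intro c
      rw [hyperSat_succ_ex Q _ _ hQ]
    | all =>
      have hproj := goodW_proj_all (K 0)
        (fun (b : β) (a : Set α) => ((b, a) : β × Set α))
        (fun c' => HyperSat k (fun j => Q j.succ) (fun j => (K j.succ).Traces) (R' c'))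
        hInner
      apply hproj.congr
      intro c
      rw [hyperSat_succ_all Q _ _ hQ]

/-- Main theorem: HyperLTL satisfaction over full traces coincides with
satisfaction over lasso traces, for good matrices. -/
theorem mainThm {α : Type} : ∀ (k : ℕ) {σ : Fin k → Type} [inst : ∀ j, Finite (σ j)]
    (K : ∀ j, Kripke (σ j) α) (Q : Fin k → Quant) (P : (Fin k → (ℕ → Set α)) → Prop),
    GoodW (fun w : ℕ → (Fin k → Set α) => P (fun j i => w i j)) →
    (HyperSat k Q (fun j => (K j).Traces) P ↔
     HyperSat k Q (fun j => (K j).LassoTraces) P) := by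
  intro k
  induction k with
  | zero => intro σ inst K Q P _; exact Iff.rfl
  | succ k ih =>
    intro σ inst K Q P hGood
    have hpeel : ∀ t : ℕ → Set α, UP t →
        GoodW (fun w : ℕ → (Fin k → Set α) =>
          (fun ts => P (Fin.cons t ts)) (fun j i => w i j)) := by
      intro t hUP
      have h1 := goodW_peel
        (fun (b : Fin k → Set α) (a : Set α) => (Fin.cons a b : Fin (k+1) → Set α))
        (fun w : ℕ → (Fin (k+1) → Set α) => P (fun j i => w i j)) hGood t hUP
      apply h1.congr
      intro w
      show P (fun j i => (Fin.cons (t i) (w i) : Fin (k+1) → Set α) j) ↔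
        P (Fin.cons t (fun j i => w i j))
      have he : (fun (j : Fin (k+1)) (i : ℕ) =>
          (Fin.cons (t i) (w i) : Fin (k+1) → Set α) j) =
          (Fin.cons t (fun (j : Fin k) (i : ℕ) => w i j) : Fin (k+1) → ℕ → Set α) := by
        funext j
        refine Fin.cases ?_ ?_ j
        · funext i; simp
        · intro j'; funext i; simp
      rw [he]
    have hInnerGood : GoodW (fun t : ℕ → Set α =>
        HyperSat k (fun j => Q j.succ) (fun j => (K j.succ).Traces)
          (fun ts => P (Fin.cons t ts))) := by
      have hJ : GoodW (fun zW : ℕ → (Set α) × (Fin k → Set α) =>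
          P (Fin.cons (fun i => (zW i).1) (fun j i => (zW i).2 j))) := by
        have h2 := hGood.comap
          (fun x : Set α × (Fin k → Set α) => (Fin.cons x.1 x.2 : Fin (k+1) → Set α))
        apply h2.congr
        intro zW
        show P (fun j i => (Fin.cons (zW i).1 (zW i).2 : Fin (k+1) → Set α) j) ↔
          P (Fin.cons (fun i => (zW i).1) (fun j i => (zW i).2 j))
        have he : (fun (j : Fin (k+1)) (i : ℕ) =>
            (Fin.cons (zW i).1 (zW i).2 : Fin (k+1) → Set α) j) =
            (Fin.cons (fun i => (zW i).1) (fun (j : Fin k) (i : ℕ) => (zW i).2 j) :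
              Fin (k+1) → ℕ → Set α) := by
          funext j
          refine Fin.cases ?_ ?_ j
          · funext i; simp
          · intro j'; funext i; simp
        rw [he]
      exact GPmain k (fun j => K j.succ) (fun j => Q j.succ)
        (fun c ts => P (Fin.cons c ts)) hJ
    cases hQ : Q 0 with
    | ex =>
      rw [hyperSat_succ_ex Q _ P hQ, hyperSat_succ_ex Q _ P hQ]
      constructor
      · rintro ⟨t, ht, hsat⟩
        obtain ⟨M, fM, mul, h, hom, satG⟩ := hInnerGood
        obtain ⟨t', ht'lasso, s, e, hft, hft'⟩ := exists_lasso_fact (K 0) t ht M mul h hom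
        have hsat' := (satG t t' s e hft hft').mp hsat
        have hUP' := lasso_up (K 0) t' ht'lasso
        exact ⟨t', ht'lasso,
          (ih (fun j => K j.succ) (fun j => Q j.succ) _ (hpeel t' hUP')).mp hsat'⟩
      · rintro ⟨t, htl, hsat⟩
        have hUP := lasso_up (K 0) t htl
        exact ⟨t, lasso_subset_traces (K 0) htl,
          (ih (fun j => K j.succ) (fun j => Q j.succ) _ (hpeel t hUP)).mpr hsat⟩
    | all =>
      rw [hyperSat_succ_all Q _ P hQ, hyperSat_succ_all Q _ P hQ]
      constructor
      · intro hall t htl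
        have hUP := lasso_up (K 0) t htl
        exact (ih (fun j => K j.succ) (fun j => Q j.succ) _ (hpeel t hUP)).mp
          (hall t (lasso_subset_traces (K 0) htl))
      · intro hall t ht
        by_contra hc
        obtain ⟨M, fM, mul, h, hom, satG⟩ := hInnerGood.not
        obtain ⟨t', ht'lasso, s, e, hft, hft'⟩ := exists_lasso_fact (K 0) t ht M mul h hom
        have hneg' := (satG t t' s e hft hft').mp hc
        have hUP' := lasso_up (K 0) t' ht'lasso
        exact hneg'
          ((ih (fun j => K j.succ) (fun j => Q j.succ) _ (hpeel t' hUP')).mpr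
            (hall t' ht'lasso))
end HyperAux
/-- A HyperLTL sentence `Q₁π₁ … Q_kπ_k. ψ` (with `ψ` an LTL body over atoms
`a_{π_j}`, i.e. over `α × Fin k`) holds on the full trace sets of the Kripke
structures iff it holds on their lasso-trace sets. -/
theorem lasso_traces_hyperltl_equiv {α : Type} [Fintype α] {k : ℕ}
    {σ : Fin k → Type} [∀ j, Fintype (σ j)]
    (K : ∀ j, Kripke (σ j) α) (Q : Fin k → Quant) (ψ : LTL (α × Fin k)) :
    HyperSat k Q (fun j => (K j).Traces)
      (fun ts => LTL.Sat (fun i => {p : α × Fin k | p.1 ∈ ts p.2 i}) 0 ψ) ↔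
    HyperSat k Q (fun j => (K j).LassoTraces)
      (fun ts => LTL.Sat (fun i => {p : α × Fin k | p.1 ∈ ts p.2 i}) 0 ψ) := by
  apply HyperAux.mainThm k K Q
  have h1 := (HyperAux.goodW_LTL ψ).comap
    (fun b : Fin k → Set α => ({p : α × Fin k | p.1 ∈ b p.2} : Set (α × Fin k)))
  apply h1.congr
  intro w
  exact Iff.rfl
end

section
/- Let K be a finite Kripke structure over AP and let ψ be an LTL formula over AP. Then every trace of K satisfies ψ if and only if every lasso trace of K satisfies ψ; equivalently, some trace of K satisfies ψ if and only if some lasso trace of K satisfies ψ. -/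
lemma lassoIdx_of_le {n ℓ m : ℕ} (h : m ≤ ℓ) : lassoIdx n ℓ m = m := if_pos h

lemma lassoIdx_le {n ℓ : ℕ} (h : n ≤ ℓ) (m : ℕ) : lassoIdx n ℓ m ≤ ℓ := by
  unfold lassoIdx
  split
  · omega
  · have : (m - n) % (ℓ + 1 - n) < ℓ + 1 - n := Nat.mod_lt _ (by omega)
    omega

lemma lassoIdx_succ {n ℓ : ℕ} (h : n ≤ ℓ) (m : ℕ) :
    lassoIdx n ℓ (m + 1) = if lassoIdx n ℓ m = ℓ then n else lassoIdx n ℓ m + 1 := by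
  rcases Nat.lt_trichotomy m ℓ with hm | hm | hm
  · rw [lassoIdx_of_le (by omega : m + 1 ≤ ℓ), lassoIdx_of_le (by omega : m ≤ ℓ),
      if_neg (by omega)]
  · have h1 : lassoIdx n ℓ m = ℓ := by rw [hm]; exact lassoIdx_of_le le_rfl
    rw [h1, if_pos rfl]
    unfold lassoIdx
    rw [if_neg (by omega)]
    have h2 : m + 1 - n = ℓ + 1 - n := by omega
    rw [h2, Nat.mod_self]
    omega
  · have hL : lassoIdx n ℓ m = n + (m - n) % (ℓ + 1 - n) := by
      unfold lassoIdx; rw [if_neg (by omega)]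
    have hL1 : lassoIdx n ℓ (m + 1) = n + (m + 1 - n) % (ℓ + 1 - n) := by
      unfold lassoIdx; rw [if_neg (by omega)]
    set P := ℓ + 1 - n with hP
    set r := (m - n) % P with hr
    have hrlt : r < P := Nat.mod_lt _ (by omega)
    have hmod : (m + 1 - n) % P = (r + 1) % P := by
      rw [show m + 1 - n = (m - n) + 1 by omega, hr, Nat.mod_add_mod]
    rw [hL1, hL, hmod]
    by_cases hrP : r + 1 = P
    · rw [hrP, Nat.mod_self, if_pos (by omega)]
      omega
    · rw [Nat.mod_eq_of_lt (by omega), if_neg (by omega)]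
      omega

lemma lassoIdx_add {n ℓ : ℕ} (h : n ≤ ℓ) (m : ℕ) :
    ∀ d, lassoIdx n ℓ m + d ≤ ℓ → lassoIdx n ℓ (m + d) = lassoIdx n ℓ m + d := by
  intro d
  induction d with
  | zero => intro _; rfl
  | succ d ih =>
    intro hd
    have h1 := ih (by omega)
    have h2 := lassoIdx_succ h (m + d)
    rw [show m + (d+1) = (m + d) + 1 by omega, h2, h1, if_neg (by omega)]
    omega

namespace LassoAux

open LTL

/-- Closure: all subformulas, plus for each release the dual until of negations. -/
def cl {α : Type} : LTL α → List (LTL α)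
  | .tt => [.tt]
  | .atom a => [.atom a]
  | .neg φ => .neg φ :: cl φ
  | .disj φ₁ φ₂ => .disj φ₁ φ₂ :: (cl φ₁ ++ cl φ₂)
  | .conj φ₁ φ₂ => .conj φ₁ φ₂ :: (cl φ₁ ++ cl φ₂)
  | .next φ => .next φ :: cl φ
  | .untl φ₁ φ₂ => .untl φ₁ φ₂ :: (cl φ₁ ++ cl φ₂)
  | .release φ₁ φ₂ => .release φ₁ φ₂ :: .untl (.neg φ₁) (.neg φ₂) ::
      .neg φ₁ :: .neg φ₂ :: (cl φ₁ ++ cl φ₂)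

lemma cl_self {α : Type} (ψ : LTL α) : ψ ∈ cl ψ := by
  cases ψ <;> simp [cl]

lemma cl_trans {α : Type} {ψ φ : LTL α} (h : φ ∈ cl ψ) : ∀ χ ∈ cl φ, χ ∈ cl ψ := by
  induction ψ with
  | tt => simp [cl] at h; subst h; simp
  | atom a => simp [cl] at h; subst h; simp
  | neg ψ ih =>
    rw [cl, List.mem_cons] at h
    rcases h with h | h
    · subst h; intro χ hχ; exact hχ
    · intro χ hχ; rw [cl, List.mem_cons]; exact Or.inr (ih h χ hχ)
  | disj ψ₁ ψ₂ ih₁ ih₂ =>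
    rw [cl, List.mem_cons, List.mem_append] at h
    rcases h with h | h | h
    · subst h; intro χ hχ; exact hχ
    · intro χ hχ; rw [cl, List.mem_cons, List.mem_append]
      exact Or.inr (Or.inl (ih₁ h χ hχ))
    · intro χ hχ; rw [cl, List.mem_cons, List.mem_append]
      exact Or.inr (Or.inr (ih₂ h χ hχ))
  | conj ψ₁ ψ₂ ih₁ ih₂ =>
    rw [cl, List.mem_cons, List.mem_append] at h
    rcases h with h | h | h
    · subst h; intro χ hχ; exact hχ
    · intro χ hχ; rw [cl, List.mem_cons, List.mem_append]
      exact Or.inr (Or.inl (ih₁ h χ hχ))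
    · intro χ hχ; rw [cl, List.mem_cons, List.mem_append]
      exact Or.inr (Or.inr (ih₂ h χ hχ))
  | next ψ ih =>
    rw [cl, List.mem_cons] at h
    rcases h with h | h
    · subst h; intro χ hχ; exact hχ
    · intro χ hχ; rw [cl, List.mem_cons]; exact Or.inr (ih h χ hχ)
  | untl ψ₁ ψ₂ ih₁ ih₂ =>
    rw [cl, List.mem_cons, List.mem_append] at h
    rcases h with h | h | h
    · subst h; intro χ hχ; exact hχ
    · intro χ hχ; rw [cl, List.mem_cons, List.mem_append]
      exact Or.inr (Or.inl (ih₁ h χ hχ))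
    · intro χ hχ; rw [cl, List.mem_cons, List.mem_append]
      exact Or.inr (Or.inr (ih₂ h χ hχ))
  | release ψ₁ ψ₂ ih₁ ih₂ =>
    rw [cl] at h
    simp only [List.mem_cons, List.mem_append] at h
    rcases h with h | h | h | h | h | h
    · subst h; intro χ hχ; exact hχ
    · subst h
      intro χ hχ
      rw [cl] at hχ
      simp only [List.mem_cons, List.mem_append] at hχ
      rcases hχ with h | h | h
      · subst h; simp [cl]
      · rw [cl, List.mem_cons] at h
        rcases h with h | h
        · subst h; simp [cl]
        · rw [cl]; simp only [List.mem_cons, List.mem_append]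
          exact Or.inr (Or.inr (Or.inr (Or.inr (Or.inl h))))
      · rw [cl, List.mem_cons] at h
        rcases h with h | h
        · subst h; simp [cl]
        · rw [cl]; simp only [List.mem_cons, List.mem_append]
          exact Or.inr (Or.inr (Or.inr (Or.inr (Or.inr h))))
    · subst h
      intro χ hχ
      rw [cl, List.mem_cons] at hχ
      rcases hχ with h | h
      · subst h; simp [cl]
      · rw [cl]; simp only [List.mem_cons, List.mem_append]
        exact Or.inr (Or.inr (Or.inr (Or.inr (Or.inl h))))
    · subst h
      intro χ hχ
      rw [cl, List.mem_cons] at hχ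
      rcases hχ with h | h
      · subst h; simp [cl]
      · rw [cl]; simp only [List.mem_cons, List.mem_append]
        exact Or.inr (Or.inr (Or.inr (Or.inr (Or.inr h))))
    · intro χ hχ; rw [cl]; simp only [List.mem_cons, List.mem_append]
      exact Or.inr (Or.inr (Or.inr (Or.inr (Or.inl (ih₁ h χ hχ)))))
    · intro χ hχ; rw [cl]; simp only [List.mem_cons, List.mem_append]
      exact Or.inr (Or.inr (Or.inr (Or.inr (Or.inr (ih₂ h χ hχ)))))

/-- Release is the dual of until. -/
lemma sat_release_iff {α : Type} (t : ℕ → Set α) (i : ℕ) (φ₁ φ₂ : LTL α) :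
    LTL.Sat t i (.release φ₁ φ₂) ↔ ¬ LTL.Sat t i (.untl (.neg φ₁) (.neg φ₂)) := by
  simp only [LTL.Sat]
  constructor
  · rintro (hall | ⟨j, hij, h1, h2⟩)
    · rintro ⟨k, hik, hk2, -⟩; exact hk2 (hall k hik)
    · rintro ⟨k, hik, hk2, hk1⟩
      rcases le_or_gt k j with hkj | hjk
      · exact hk2 (h2 k hik hkj)
      · exact hk1 j hij hjk h1
  · intro hno
    by_cases hall : ∀ j, i ≤ j → LTL.Sat t j φ₂
    · exact Or.inl hall
    · push_neg at hall
      have hex : ∃ j, i ≤ j ∧ ¬ LTL.Sat t j φ₂ := hall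
      classical
      let P : ℕ → Prop := fun j => i ≤ j ∧ ¬ LTL.Sat t j φ₂
      have hP : ∃ j, P j := hex
      let j₀ := Nat.find hP
      have hj₀ : P j₀ := Nat.find_spec hP
      have hmin : ∀ m, m < j₀ → ¬ P m := fun m hm => Nat.find_min hP hm
      -- since ¬ until, there must be a position in [i, j₀) where φ₁ holds
      by_cases hex1 : ∃ m, i ≤ m ∧ m < j₀ ∧ LTL.Sat t m φ₁
      · obtain ⟨m, him, hmj, hm1⟩ := hex1
        refine Or.inr ⟨m, him, hm1, fun k hik hkm => ?_⟩
        by_contra hk2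
        exact hmin k (by omega) ⟨hik, hk2⟩
      · exfalso
        push_neg at hex1
        exact hno ⟨j₀, hj₀.1, hj₀.2, fun m him hmj hm1 => hex1 m him hmj hm1⟩

/-- Bounded fulfillment: all untils in a list satisfied at `i` have a bounded witness. -/
lemma exists_bound {α : Type} (t : ℕ → Set α) (i : ℕ) (l : List (LTL α)) :
    ∃ B, ∀ φ₁ φ₂ : LTL α, LTL.untl φ₁ φ₂ ∈ l → LTL.Sat t i (.untl φ₁ φ₂) →
      ∃ k, i ≤ k ∧ k < B ∧ LTL.Sat t k φ₂ ∧ ∀ m, i ≤ m → m < k → LTL.Sat t m φ₁ := by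
  classical
  induction l with
  | nil => exact ⟨0, by simp⟩
  | cons φ l ih =>
    obtain ⟨B, hB⟩ := ih
    by_cases hex : ∃ φa φb : LTL α, φ = LTL.untl φa φb ∧ LTL.Sat t i φ
    · obtain ⟨φa, φb, heq, hsat⟩ := hex
      subst heq
      obtain ⟨k, hik, hk2, hk1⟩ : ∃ k, i ≤ k ∧ LTL.Sat t k φb ∧
          ∀ m, i ≤ m → m < k → LTL.Sat t m φa := hsat
      refine ⟨max B (k + 1), fun φ₁ φ₂ hmem hsat' => ?_⟩
      rcases List.mem_cons.1 hmem with heq | hmem'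
      · injection heq with e1 e2
        subst e1; subst e2
        exact ⟨k, hik, by omega, hk2, hk1⟩
      · obtain ⟨k', h1, h2, h3, h4⟩ := hB φ₁ φ₂ hmem' hsat'
        exact ⟨k', h1, by omega, h3, h4⟩
    · refine ⟨B, fun φ₁ φ₂ hmem hsat' => ?_⟩
      rcases List.mem_cons.1 hmem with heq | hmem'
      · exact absurd ⟨φ₁, φ₂, heq.symm, heq ▸ hsat'⟩ hex
      · exact hB φ₁ φ₂ hmem' hsat'

end LassoAux

namespace LassoAux

/-- Key lemma: invariance of `until` under loop unrolling. -/
lemma until_inv {α : Type} (t : ℕ → Set α) (i ℓ : ℕ) (hil : i ≤ ℓ) (φ₁ φ₂ : LTL α)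
    (H₁ : ∀ m, LTL.Sat (fun x => t (lassoIdx i ℓ x)) m φ₁ ↔ LTL.Sat t (lassoIdx i ℓ m) φ₁)
    (H₂ : ∀ m, LTL.Sat (fun x => t (lassoIdx i ℓ x)) m φ₂ ↔ LTL.Sat t (lassoIdx i ℓ m) φ₂)
    (htu : LTL.Sat t i (.untl φ₁ φ₂) ↔ LTL.Sat t (ℓ + 1) (.untl φ₁ φ₂))
    (hfu : LTL.Sat t i (.untl φ₁ φ₂) → ∃ k, i ≤ k ∧ k ≤ ℓ ∧ LTL.Sat t k φ₂ ∧
      ∀ m, i ≤ m → m < k → LTL.Sat t m φ₁) :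
    ∀ m, LTL.Sat (fun x => t (lassoIdx i ℓ x)) m (.untl φ₁ φ₂) ↔
      LTL.Sat t (lassoIdx i ℓ m) (.untl φ₁ φ₂) := by
  intro m
  constructor
  · -- forward direction, by induction on the distance to the witness
    have aux : ∀ d m, LTL.Sat t (lassoIdx i ℓ (m + d)) φ₂ →
        (∀ x, m ≤ x → x < m + d → LTL.Sat t (lassoIdx i ℓ x) φ₁) →
        LTL.Sat t (lassoIdx i ℓ m) (.untl φ₁ φ₂) := by
      intro d
      induction d with
      | zero =>
        intro m h2 _
        exact ⟨lassoIdx i ℓ m, le_rfl, h2, fun x h1 h2 => absurd h2 (by omega)⟩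
      | succ d ih =>
        intro m h2 hmid
        have hnext : LTL.Sat t (lassoIdx i ℓ (m + 1)) (.untl φ₁ φ₂) := by
          apply ih (m + 1)
          · rw [show m + 1 + d = m + (d + 1) by omega]; exact h2
          · intro x hx1 hx2; exact hmid x (by omega) (by omega)
        have hφ₁ : LTL.Sat t (lassoIdx i ℓ m) φ₁ := hmid m le_rfl (by omega)
        have hstep := lassoIdx_succ hil m
        by_cases hend : lassoIdx i ℓ m = ℓ
        · rw [hstep, if_pos hend] at hnext
          have hℓ1 : LTL.Sat t (ℓ + 1) (.untl φ₁ φ₂) := htu.mp hnext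
          obtain ⟨k, hk1, hk2, hk3⟩ : ∃ k, ℓ + 1 ≤ k ∧ LTL.Sat t k φ₂ ∧
              ∀ x, ℓ + 1 ≤ x → x < k → LTL.Sat t x φ₁ := hℓ1
          refine ⟨k, by omega, hk2, fun x hx1 hx2 => ?_⟩
          rcases eq_or_lt_of_le hx1 with heq | hlt
          · exact heq ▸ hφ₁
          · exact hk3 x (by rw [hend] at hlt; omega) hx2
        · rw [hstep, if_neg hend] at hnext
          obtain ⟨k, hk1, hk2, hk3⟩ : ∃ k, lassoIdx i ℓ m + 1 ≤ k ∧ LTL.Sat t k φ₂ ∧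
              ∀ x, lassoIdx i ℓ m + 1 ≤ x → x < k → LTL.Sat t x φ₁ := hnext
          refine ⟨k, by omega, hk2, fun x hx1 hx2 => ?_⟩
          rcases eq_or_lt_of_le hx1 with heq | hlt
          · rw [← heq]; exact hφ₁
          · exact hk3 x (by omega) hx2
    intro hs
    obtain ⟨k, hk1, hk2, hk3⟩ : ∃ k, m ≤ k ∧
        LTL.Sat (fun x => t (lassoIdx i ℓ x)) k φ₂ ∧
        ∀ x, m ≤ x → x < k → LTL.Sat (fun x => t (lassoIdx i ℓ x)) x φ₁ := hs
    apply aux (k - m) m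
    · rw [show m + (k - m) = k by omega]; exact (H₂ k).mp hk2
    · intro x hx1 hx2; exact (H₁ x).mp (hk3 x hx1 (by omega))
  · -- backward direction
    intro hs
    set q := lassoIdx i ℓ m with hq
    have hqℓ : q ≤ ℓ := lassoIdx_le hil m
    obtain ⟨k, hk1, hk2, hk3⟩ : ∃ k, q ≤ k ∧ LTL.Sat t k φ₂ ∧
        ∀ x, q ≤ x → x < k → LTL.Sat t x φ₁ := hs
    by_cases hkℓ : k ≤ ℓ
    · -- witness within the loop segment
      have hfk : lassoIdx i ℓ (m + (k - q)) = k := by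
        rw [lassoIdx_add hil m (k - q) (by omega)]; omega
      refine ⟨m + (k - q), by omega, ?_, ?_⟩
      · rw [H₂, hfk]; exact hk2
      · intro x hx1 hx2
        have he : lassoIdx i ℓ x = q + (x - m) := by
          rw [show x = m + (x - m) by omega, lassoIdx_add hil m (x - m) (by omega)]
          omega
        rw [H₁, he]
        exact hk3 (q + (x - m)) (by omega) (by omega)
    · -- witness beyond the loop: go around once and use fulfillment
      have hju : LTL.Sat t (ℓ + 1) (.untl φ₁ φ₂) :=
        ⟨k, by omega, hk2, fun x hx1 hx2 => hk3 x (by omega) hx2⟩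
      obtain ⟨k', hik', hk'ℓ, hk'2, hk'1⟩ := hfu (htu.mpr hju)
      have hfm1 : lassoIdx i ℓ (m + (ℓ - q)) = ℓ := by
        rw [lassoIdx_add hil m (ℓ - q) (by omega)]; omega
      have hfm2 : lassoIdx i ℓ (m + (ℓ - q) + 1) = i := by
        rw [lassoIdx_succ hil, if_pos hfm1]
      have hfK : lassoIdx i ℓ (m + (ℓ - q) + 1 + (k' - i)) = k' := by
        rw [lassoIdx_add hil (m + (ℓ - q) + 1) (k' - i) (by omega), hfm2]; omega
      refine ⟨m + (ℓ - q) + 1 + (k' - i), by omega, ?_, ?_⟩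
      · rw [H₂, hfK]; exact hk'2
      · intro x hx1 hx2
        by_cases hxsplit : x ≤ m + (ℓ - q)
        · have he : lassoIdx i ℓ x = q + (x - m) := by
            rw [show x = m + (x - m) by omega, lassoIdx_add hil m (x - m) (by omega)]
            omega
          rw [H₁, he]
          exact hk3 (q + (x - m)) (by omega) (by omega)
        · have he : lassoIdx i ℓ x = i + (x - (m + (ℓ - q) + 1)) := by
            rw [show x = (m + (ℓ - q) + 1) + (x - (m + (ℓ - q) + 1)) by omega,
              lassoIdx_add hil (m + (ℓ - q) + 1) _ (by rw [hfm2]; omega), hfm2]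
            omega
          rw [H₁, he]
          exact hk'1 (i + (x - (m + (ℓ - q) + 1))) (by omega) (by omega)

end LassoAux

namespace LassoAux

lemma inv_lemma {α : Type} (t : ℕ → Set α) (ψ : LTL α) (i ℓ : ℕ) (hil : i ≤ ℓ)
    (htype : ∀ φ ∈ cl ψ, (LTL.Sat t i φ ↔ LTL.Sat t (ℓ + 1) φ))
    (hful : ∀ φ₁ φ₂ : LTL α, LTL.untl φ₁ φ₂ ∈ cl ψ → LTL.Sat t i (.untl φ₁ φ₂) →
      ∃ k, i ≤ k ∧ k ≤ ℓ ∧ LTL.Sat t k φ₂ ∧ ∀ m, i ≤ m → m < k → LTL.Sat t m φ₁) :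
    ∀ φ, φ ∈ cl ψ → ∀ m,
      LTL.Sat (fun x => t (lassoIdx i ℓ x)) m φ ↔ LTL.Sat t (lassoIdx i ℓ m) φ := by
  intro φ
  induction φ with
  | tt => intro _ m; simp [LTL.Sat]
  | atom a => intro _ m; exact Iff.rfl
  | neg φ ih =>
    intro hmem m
    have h1 : φ ∈ cl ψ := cl_trans hmem φ (by rw [cl]; exact List.mem_cons_of_mem _ (cl_self φ))
    exact not_congr (ih h1 m)
  | disj φ₁ φ₂ ih₁ ih₂ =>
    intro hmem m
    have h1 : φ₁ ∈ cl ψ := cl_trans hmem φ₁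
      (by rw [cl]; exact List.mem_cons_of_mem _ (List.mem_append_left _ (cl_self φ₁)))
    have h2 : φ₂ ∈ cl ψ := cl_trans hmem φ₂
      (by rw [cl]; exact List.mem_cons_of_mem _ (List.mem_append_right _ (cl_self φ₂)))
    exact or_congr (ih₁ h1 m) (ih₂ h2 m)
  | conj φ₁ φ₂ ih₁ ih₂ =>
    intro hmem m
    have h1 : φ₁ ∈ cl ψ := cl_trans hmem φ₁
      (by rw [cl]; exact List.mem_cons_of_mem _ (List.mem_append_left _ (cl_self φ₁)))
    have h2 : φ₂ ∈ cl ψ := cl_trans hmem φ₂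
      (by rw [cl]; exact List.mem_cons_of_mem _ (List.mem_append_right _ (cl_self φ₂)))
    exact and_congr (ih₁ h1 m) (ih₂ h2 m)
  | next φ ih =>
    intro hmem m
    have h1 : φ ∈ cl ψ := cl_trans hmem φ (by rw [cl]; exact List.mem_cons_of_mem _ (cl_self φ))
    show LTL.Sat (fun x => t (lassoIdx i ℓ x)) (m + 1) φ ↔ LTL.Sat t (lassoIdx i ℓ m + 1) φ
    rw [ih h1 (m + 1), lassoIdx_succ hil m]
    split_ifs with hend
    · rw [hend]; exact htype φ h1
    · exact Iff.rfl
  | untl φ₁ φ₂ ih₁ ih₂ =>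
    intro hmem m
    have h1 : φ₁ ∈ cl ψ := cl_trans hmem φ₁
      (by rw [cl]; exact List.mem_cons_of_mem _ (List.mem_append_left _ (cl_self φ₁)))
    have h2 : φ₂ ∈ cl ψ := cl_trans hmem φ₂
      (by rw [cl]; exact List.mem_cons_of_mem _ (List.mem_append_right _ (cl_self φ₂)))
    exact until_inv t i ℓ hil φ₁ φ₂ (ih₁ h1) (ih₂ h2) (htype _ hmem) (hful φ₁ φ₂ hmem) m
  | release φ₁ φ₂ ih₁ ih₂ =>
    intro hmem m
    have h1 : φ₁ ∈ cl ψ := cl_trans hmem φ₁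
      (by rw [cl]
          exact List.mem_cons_of_mem _ (List.mem_cons_of_mem _ (List.mem_cons_of_mem _
            (List.mem_cons_of_mem _ (List.mem_append_left _ (cl_self φ₁))))))
    have h2 : φ₂ ∈ cl ψ := cl_trans hmem φ₂
      (by rw [cl]
          exact List.mem_cons_of_mem _ (List.mem_cons_of_mem _ (List.mem_cons_of_mem _
            (List.mem_cons_of_mem _ (List.mem_append_right _ (cl_self φ₂))))))
    have hu : LTL.untl (.neg φ₁) (.neg φ₂) ∈ cl ψ := cl_trans hmem _
      (by rw [cl]; exact List.mem_cons_of_mem _ List.mem_cons_self)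
    have Hn₁ : ∀ m, LTL.Sat (fun x => t (lassoIdx i ℓ x)) m (.neg φ₁) ↔
        LTL.Sat t (lassoIdx i ℓ m) (.neg φ₁) := fun m => not_congr (ih₁ h1 m)
    have Hn₂ : ∀ m, LTL.Sat (fun x => t (lassoIdx i ℓ x)) m (.neg φ₂) ↔
        LTL.Sat t (lassoIdx i ℓ m) (.neg φ₂) := fun m => not_congr (ih₂ h2 m)
    have HU := until_inv t i ℓ hil (.neg φ₁) (.neg φ₂) Hn₁ Hn₂ (htype _ hu)
      (hful _ _ hu)
    rw [sat_release_iff, sat_release_iff]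
    exact not_congr (HU m)

end LassoAux

lemma lasso_subset_traces {S α : Type} (K : Kripke S α) : K.LassoTraces ⊆ K.Traces := by
  rintro t ⟨s, n, ℓ, hnℓ, hinit, hδ, hback, htr⟩
  refine ⟨fun m => s (lassoIdx n ℓ m), ⟨?_, ?_⟩, htr⟩
  · show s (lassoIdx n ℓ 0) ∈ K.init
    rw [lassoIdx_of_le (Nat.zero_le ℓ)]; exact hinit
  · intro m
    show K.delta (s (lassoIdx n ℓ m)) (s (lassoIdx n ℓ (m + 1)))
    rw [lassoIdx_succ hnℓ.le m]
    split_ifs with hend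
    · rw [hend]; exact hback
    · exact hδ _ (lt_of_le_of_ne (lassoIdx_le hnℓ.le m) hend)

lemma exists_lasso {S α : Type} [Fintype S] (K : Kripke S α) (ψ : LTL α) (t : ℕ → Set α)
    (ht : t ∈ K.Traces) (hs : LTL.Sat t 0 ψ) :
    ∃ t' ∈ K.LassoTraces, LTL.Sat t' 0 ψ := by
  classical
  obtain ⟨p, ⟨hp0, hpδ⟩, htp⟩ := ht
  haveI : Finite {x // x ∈ LassoAux.cl ψ} := (List.finite_toSet (LassoAux.cl ψ)).to_subtype
  let F : ℕ → S × ({x // x ∈ LassoAux.cl ψ} → Prop) :=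
    fun m => (p m, fun φ => LTL.Sat t m φ.1)
  obtain ⟨v, hv⟩ := Finite.exists_infinite_fiber F
  rw [Set.infinite_coe_iff] at hv
  obtain ⟨i, hi⟩ := hv.nonempty
  obtain ⟨B, hB⟩ := LassoAux.exists_bound t i (LassoAux.cl ψ)
  obtain ⟨j, hj, hij⟩ := hv.exists_gt (max B (i + 1))
  have hiv : F i = v := hi
  have hjv : F j = v := hj
  have hFij : F i = F j := by rw [hiv, hjv]
  have hpij : p i = p j := congrArg Prod.fst hFij
  have htype' : ∀ φ ∈ LassoAux.cl ψ, (LTL.Sat t i φ ↔ LTL.Sat t j φ) := by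
    intro φ hφ
    exact iff_of_eq (congrFun (congrArg Prod.snd hFij) ⟨φ, hφ⟩)
  set ℓ := j - 1 with hℓ
  have hj1 : j = ℓ + 1 := by omega
  have hiℓ : i < ℓ := by omega
  have htype : ∀ φ ∈ LassoAux.cl ψ, (LTL.Sat t i φ ↔ LTL.Sat t (ℓ + 1) φ) := by
    rw [← hj1]; exact htype'
  have hful : ∀ φ₁ φ₂ : LTL α, LTL.untl φ₁ φ₂ ∈ LassoAux.cl ψ →
      LTL.Sat t i (.untl φ₁ φ₂) → ∃ k, i ≤ k ∧ k ≤ ℓ ∧ LTL.Sat t k φ₂ ∧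
        ∀ m, i ≤ m → m < k → LTL.Sat t m φ₁ := by
    intro φ₁ φ₂ hm hsat
    obtain ⟨k, h1, h2, h3, h4⟩ := hB φ₁ φ₂ hm hsat
    exact ⟨k, h1, by omega, h3, h4⟩
  have hinv := LassoAux.inv_lemma t ψ i ℓ hiℓ.le htype hful ψ (LassoAux.cl_self ψ)
  refine ⟨fun m => t (lassoIdx i ℓ m), ⟨p, i, ℓ, hiℓ, hp0, fun x _ => hpδ x, ?_, ?_⟩, ?_⟩
  · have hd := hpδ ℓ
    rw [← hj1] at hd
    rw [← hpij] at hd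
    exact hd
  · intro m
    show t (lassoIdx i ℓ m) = K.L (p (lassoIdx i ℓ m))
    rw [htp]
  · have h0 := hinv 0
    rw [lassoIdx_of_le (Nat.zero_le ℓ)] at h0
    exact h0.mpr hs

/-- Every trace of a finite Kripke structure `K` satisfies the LTL formula `ψ` iff
every lasso trace of `K` does; equivalently, some trace of `K` satisfies `ψ` iff
some lasso trace of `K` does. -/
theorem lasso_traces_ltl_equiv {S α : Type} [Fintype S] [Fintype α]
    (K : Kripke S α) (ψ : LTL α) :
    ((∀ t ∈ K.Traces, LTL.Sat t 0 ψ) ↔ (∀ t ∈ K.LassoTraces, LTL.Sat t 0 ψ)) ∧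
    ((∃ t ∈ K.Traces, LTL.Sat t 0 ψ) ↔ (∃ t ∈ K.LassoTraces, LTL.Sat t 0 ψ)) := by
  have hsub := lasso_subset_traces K
  constructor
  · constructor
    · intro h t ht; exact h t (hsub ht)
    · intro h t ht
      by_contra hns
      have hneg : LTL.Sat t 0 (.neg ψ) := hns
      obtain ⟨t', ht', hs'⟩ := exists_lasso K (.neg ψ) t ht hneg
      exact hs' (h t' ht')
  · constructor
    · rintro ⟨t, ht, hs⟩
      exact exists_lasso K ψ t ht hs
    · rintro ⟨t, ht, hs⟩
      exact ⟨t, hsub ht, hs⟩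
end

section
/- Let K_A and K_B be finite Kripke structures over AP and let Pred ⊆ 2^AP × 2^AP be a relational predicate. Then there exists a trace t ∈ Traces(K_A) such that Pred(t(i), t'(i)) holds for all t' ∈ Traces(K_B) and all i ∈ ℕ, if and only if there exists a lasso trace t ∈ LassoTraces(K_A) such that Pred(t(i), t'(i)) holds for all t' ∈ Traces(K_B) and all i ∈ ℕ. In particular, if ⟨K_A, K_B⟩ satisfies ∃π.∀π'. □Pred, then a single lasso trace of K_A serves as the existential witness. -/
noncomputable def nxt {S α : Type} (K : Kripke S α) (s : S) : S := (K.total s).choose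

lemma nxt_delta {S α : Type} (K : Kripke S α) (s : S) : K.delta s (nxt K s) :=
  (K.total s).choose_spec

/-- States reachable in exactly `j` steps. -/
def Reach {S α : Type} (K : Kripke S α) (j : ℕ) : Set S :=
  {s | ∃ q : ℕ → S, q 0 ∈ K.init ∧ (∀ k, k < j → K.delta (q k) (q (k + 1))) ∧ q j = s}

def post {S α : Type} (K : Kripke S α) (R : Set S) : Set S :=
  {s' | ∃ s ∈ R, K.delta s s'}

lemma reach_succ {S α : Type} (K : Kripke S α) (j : ℕ) :
    Reach K (j + 1) = post K (Reach K j) := by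
  ext s'
  constructor
  · rintro ⟨q, h0, hd, rfl⟩
    exact ⟨q j, ⟨q, h0, fun k hk => hd k (by omega), rfl⟩, hd j (by omega)⟩
  · rintro ⟨s, ⟨q, h0, hd, rfl⟩, hds'⟩
    refine ⟨fun k => if k ≤ j then q k else s', by simpa using h0, ?_, by simp⟩
    intro k hk
    rcases lt_or_eq_of_le (Nat.lt_succ_iff.mp hk) with h | h
    · simp only [if_pos (le_of_lt h), if_pos (Nat.succ_le_of_lt h)]
      exact hd k h
    · subst h
      simpa using hds'

lemma reach_add {S α : Type} (K : Kripke S α) (n k : ℕ) :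
    Reach K (n + k) = (post K)^[k] (Reach K n) := by
  induction k with
  | zero => rfl
  | succ k ih => rw [← Nat.add_assoc, reach_succ, ih, Function.iterate_succ_apply']

lemma path_mem_reach {S α : Type} (K : Kripke S α) {p : ℕ → S} (hp : K.IsPath p) (i : ℕ) :
    p i ∈ Reach K i :=
  ⟨p, hp.1, fun k _ => hp.2 k, rfl⟩

lemma reach_to_trace {S α : Type} (K : Kripke S α) {s : S} {j : ℕ} (hs : s ∈ Reach K j) :
    ∃ t' ∈ K.Traces, t' j = K.L s := by
  obtain ⟨q, h0, hd, rfl⟩ := hs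
  refine ⟨fun i => K.L (if i ≤ j then q i else (nxt K)^[i - j] (q j)),
    ⟨fun i => if i ≤ j then q i else (nxt K)^[i - j] (q j), ⟨by simpa using h0, ?_⟩,
      fun i => rfl⟩, by simp⟩
  intro i
  rcases lt_trichotomy i j with h | h | h
  · simp only [if_pos (le_of_lt h), if_pos (Nat.succ_le_of_lt h)]
    exact hd i h
  · subst h
    simp only [le_refl, if_pos, if_neg (by omega : ¬ i + 1 ≤ i)]
    have : i + 1 - i = 1 := by omega
    rw [this]
    simpa using nxt_delta K (q i)
  · simp only [if_neg (by omega : ¬ i ≤ j), if_neg (by omega : ¬ i + 1 ≤ j)]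
    have : i + 1 - j = (i - j) + 1 := by omega
    rw [this, Function.iterate_succ_apply']
    exact nxt_delta K _

lemma lassoIdx_step {n ℓ : ℕ} (hnℓ : n < ℓ) (i : ℕ) :
    (lassoIdx n ℓ i < ℓ ∧ lassoIdx n ℓ (i + 1) = lassoIdx n ℓ i + 1) ∨
    (lassoIdx n ℓ i = ℓ ∧ lassoIdx n ℓ (i + 1) = n) := by
  have hP2 : 2 ≤ ℓ + 1 - n := by omega
  unfold lassoIdx
  rcases le_or_gt (i + 1) ℓ with h | h
  · rw [if_pos (by omega), if_pos h]
    left; omega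
  rcases le_or_gt i ℓ with h' | h'
  · -- i = ℓ
    have hi : i = ℓ := by omega
    rw [if_pos h', if_neg (by omega)]
    right
    subst hi
    rw [show i + 1 - n = i + 1 - n by rfl, show (i + 1 - n) % (i + 1 - n) = 0 from Nat.mod_self _]
    omega
  · rw [if_neg (by omega), if_neg (by omega)]
    have hr : (i - n) % (ℓ + 1 - n) < ℓ + 1 - n := Nat.mod_lt _ (by omega)
    have h1 : i + 1 - n = (i - n) + 1 := by omega
    rw [h1]
    have hmod : ((i - n) + 1) % (ℓ + 1 - n) = ((i - n) % (ℓ + 1 - n) + 1) % (ℓ + 1 - n) := by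
      conv_lhs => rw [Nat.add_mod]
      rw [Nat.mod_eq_of_lt (by omega : 1 < ℓ + 1 - n)]
    rcases lt_or_eq_of_le (Nat.succ_le_of_lt hr) with h2 | h2
    · left
      rw [hmod, Nat.mod_eq_of_lt (show (i - n) % (ℓ + 1 - n) + 1 < ℓ + 1 - n by omega)]
      omega
    · right
      rw [hmod, show (i - n) % (ℓ + 1 - n) + 1 = ℓ + 1 - n by omega, Nat.mod_self]
      omega

lemma lasso_unroll {S α : Type} (K : Kripke S α) {s : ℕ → S} {n ℓ : ℕ} (hnℓ : n < ℓ)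
    (h0 : s 0 ∈ K.init) (hstep : ∀ i, i < ℓ → K.delta (s i) (s (i + 1)))
    (hloop : K.delta (s ℓ) (s n)) :
    K.IsPath (fun i => s (lassoIdx n ℓ i)) := by
  constructor
  · show s (lassoIdx n ℓ 0) ∈ K.init
    rw [show lassoIdx n ℓ 0 = 0 from if_pos (Nat.zero_le ℓ)]
    exact h0
  · intro i
    show K.delta (s (lassoIdx n ℓ i)) (s (lassoIdx n ℓ (i + 1)))
    rcases lassoIdx_step hnℓ i with ⟨h1, h2⟩ | ⟨h1, h2⟩
    · rw [h2]
      exact hstep _ h1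
    · rw [h1, h2]
      exact hloop



/-- `⟨K_A, K_B⟩ ⊨ ∃π.∀π\'. □Pred` holds iff a single lasso trace of `K_A` serves
as the existential witness. -/
theorem lasso_witness_exists_forall_equiv {S₁ S₂ α : Type}
    [Fintype S₁] [Fintype S₂] [Fintype α]
    (KA : Kripke S₁ α) (KB : Kripke S₂ α) (Pred : Set α → Set α → Prop) :
    (∃ t ∈ KA.Traces, ∀ t' ∈ KB.Traces, ∀ i, Pred (t i) (t' i)) ↔
    (∃ t ∈ KA.LassoTraces, ∀ t' ∈ KB.Traces, ∀ i, Pred (t i) (t' i)) := by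
  constructor
  · rintro ⟨t, ⟨p, ⟨h0, hd⟩, ht⟩, hpred⟩
    obtain ⟨y, hy⟩ := Finite.exists_infinite_fiber (fun j : ℕ => (p j, Reach KB j))
    have hinf : Set.Infinite ((fun j : ℕ => (p j, Reach KB j)) ⁻¹' {y}) :=
      Set.infinite_coe_iff.mp hy
    obtain ⟨n, hn⟩ := hinf.nonempty
    obtain ⟨m, hm, hnm⟩ := hinf.exists_gt (n + 1)
    have hn' : (p n, Reach KB n) = y := hn
    have hm' : (p m, Reach KB m) = y := hm
    have hpm : p m = p n := by
      have := hn' ▸ hm'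
      exact (Prod.ext_iff.mp this).1
    have hRm : Reach KB m = Reach KB n := by
      have := hn' ▸ hm'
      exact (Prod.ext_iff.mp this).2
    set ℓ := m - 1 with hℓ
    have hℓm : ℓ + 1 = m := by omega
    have hnℓ : n < ℓ := by omega
    have key : ∀ i, Reach KB (lassoIdx n ℓ i) = Reach KB i := by
      intro i
      unfold lassoIdx
      split_ifs with h
      · rfl
      · have hper : Function.IsPeriodicPt (post KB) (ℓ + 1 - n) (Reach KB n) := by
          unfold Function.IsPeriodicPt Function.IsFixedPt
          rw [← reach_add, show n + (ℓ + 1 - n) = m by omega, hRm]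
        nth_rewrite 2 [show i = n + (i - n) by omega]
        rw [reach_add, reach_add]
        exact hper.iterate_mod_apply (i - n)
    refine ⟨fun i => KA.L (p (lassoIdx n ℓ i)),
      ⟨p, n, ℓ, hnℓ, h0, fun i _ => hd i, ?_, fun i => rfl⟩, ?_⟩
    · have := hd ℓ
      rw [hℓm, hpm] at this
      exact this
    · rintro t' ⟨q, hq, htq⟩ i
      have hqi : q i ∈ Reach KB i := path_mem_reach KB hq i
      rw [← key i] at hqi
      obtain ⟨t'', ht'', heq⟩ := reach_to_trace KB hqi
      have hP := hpred t'' ht'' (lassoIdx n ℓ i)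
      rw [ht, heq] at hP
      rw [htq i]
      exact hP
  · rintro ⟨t, ⟨s, n, ℓ, hnℓ, h0, hstep, hloop, ht⟩, hpred⟩
    exact ⟨t, ⟨fun i => s (lassoIdx n ℓ i), lasso_unroll KA hnℓ h0 hstep hloop, ht⟩, hpred⟩
end

section
/- Let K_A = (S_A, S_A⁰, δ_A, AP, L_A) and K_B = (S_B, S_B⁰, δ_B, AP, L_B) be Kripke structures and let Pred ⊆ 2^AP × 2^AP be a relational predicate. Suppose R ⊆ S_A × S_B is an AE-simulation (SIM_AE) from K_A to K_B, i.e.: (1) for every s_A ∈ S_A⁰ there exists s_B ∈ S_B⁰ with (s_A, s_B) ∈ R; (2) for every (s_A, s_B) ∈ R, Pred(L_A(s_A), L_B(s_B)) holds; (3) for every (s_A, s_B) ∈ R and every s'_A with (s_A, s'_A) ∈ δ_A, there exists s'_B with (s_B, s'_B) ∈ δ_B and (s'_A, s'_B) ∈ R. Then for every path p of K_A there exists a path q of K_B such that Pred(L_A(p i), L_B(q i)) holds for all i ∈ ℕ; in particular, ⟨K_A, K_B⟩ satisfies the HyperLTL formula ∀π.∃π'. □Pred. -/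
/-- Soundness of AE-simulation: if `R` is a `SIM_AE` from `K_A` to `K_B` w.r.t. `Pred`,
then every path of `K_A` is matched by a path of `K_B` satisfying `Pred` pointwise;
in particular `⟨K_A, K_B⟩ ⊨ ∀π.∃π\'. □Pred`. -/
theorem simAE_sound {S₁ S₂ α : Type} [Fintype S₁] [Fintype S₂] [Fintype α]
    (KA : Kripke S₁ α) (KB : Kripke S₂ α) (Pred : Set α → Set α → Prop)
    (R : S₁ → S₂ → Prop)
    (h1 : ∀ sA ∈ KA.init, ∃ sB ∈ KB.init, R sA sB)
    (h2 : ∀ sA sB, R sA sB → Pred (KA.L sA) (KB.L sB))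
    (h3 : ∀ sA sB, R sA sB → ∀ sA', KA.delta sA sA' →
      ∃ sB', KB.delta sB sB' ∧ R sA' sB') :
    (∀ p, KA.IsPath p → ∃ q, KB.IsPath q ∧ ∀ i, Pred (KA.L (p i)) (KB.L (q i))) ∧
    (∀ t ∈ KA.Traces, ∃ t' ∈ KB.Traces, ∀ i, Pred (t i) (t' i)) := by
  have main : ∀ p, KA.IsPath p → ∃ q, KB.IsPath q ∧ ∀ i, Pred (KA.L (p i)) (KB.L (q i)) := by
    intro p hp
    obtain ⟨h0, hstep⟩ := hp
    obtain ⟨b0, hb0, hr0⟩ := h1 (p 0) h0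
    -- build q with invariant R (p i) (q i)
    have key : ∀ i, ∃ q : S₂, R (p i) q := by
      intro i; induction i with
      | zero => exact ⟨b0, hr0⟩
      | succ n ih =>
        obtain ⟨q, hq⟩ := ih
        obtain ⟨q', _, hq'⟩ := h3 _ _ hq _ (hstep n)
        exact ⟨q', hq'⟩
    let q : ∀ i : ℕ, {b : S₂ // R (p i) b ∧ (i = 0 → b = b0)} := fun i =>
      Nat.rec ⟨b0, hr0, fun _ => rfl⟩
        (fun n qn => ⟨Classical.choose (h3 _ _ qn.2.1 _ (hstep n)),
          (Classical.choose_spec (h3 _ _ qn.2.1 _ (hstep n))).2,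
          fun h => absurd h (Nat.succ_ne_zero n)⟩) i
    refine ⟨fun i => (q i).1, ⟨?_, ?_⟩, ?_⟩
    · show (q 0).1 ∈ KB.init
      rw [(q 0).2.2 rfl]; exact hb0
    · intro i
      exact (Classical.choose_spec (h3 _ _ (q i).2.1 _ (hstep i))).1
    · intro i; exact h2 _ _ (q i).2.1
  refine ⟨main, ?_⟩
  intro t ht
  obtain ⟨p, hp, hpt⟩ := ht
  obtain ⟨qq, hq, hpred⟩ := main p hp
  exact ⟨fun i => KB.L (qq i), ⟨qq, hq, fun i => rfl⟩, fun i => by rw [hpt i]; exact hpred i⟩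
end

section
/- Let K_A = (S_A, S_A⁰, δ_A, AP, L_A) and K_B = (S_B, S_B⁰, δ_B, AP, L_B) be Kripke structures and let Pred ⊆ 2^AP × 2^AP be a relational predicate. Suppose there exist a lasso path s(1), …, s(ℓ) of K_A with loopback index n (i.e., s(1) ∈ S_A⁰, (s(i), s(i+1)) ∈ δ_A for 1 ≤ i < ℓ, and (s(ℓ), s(n)) ∈ δ_A for some 1 ≤ n ≤ ℓ), and a relation R ⊆ {1, …, ℓ} × S_B, which together form an EA-simulation (SIM_EA) from K_A to K_B, i.e.: (1) for every (i, s_q) ∈ R, Pred(L_A(s(i)), L_B(s_q)) holds; (2) (1, s_q) ∈ R for every s_q ∈ S_B⁰; (3) if (i, s_q) ∈ R and (s_q, s'_q) ∈ δ_B then (succ(i), s'_q) ∈ R, where succ(i) = i+1 for i < ℓ and succ(ℓ) = n. Then the lasso trace t of this lasso path satisfies: for every trace t' ∈ Traces(K_B) and every i ∈ ℕ, Pred(t(i), t'(i)) holds; in particular, ⟨K_A, K_B⟩ satisfies the HyperLTL formula ∃π.∀π'. □Pred. -/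
lemma succ_mod_aux (a m : ℕ) (hm : 0 < m) :
    (a + 1) % m = if a % m + 1 = m then 0 else a % m + 1 := by
  have hd := Nat.div_add_mod a m
  have hr : a % m < m := Nat.mod_lt a hm
  split
  · next h =>
    have hmm : m * (a / m + 1) = m * (a / m) + m := by ring
    have : a + 1 = m * (a / m + 1) := by omega
    rw [this, Nat.mul_mod_right]
  · next h =>
    have : a + 1 = m * (a / m) + (a % m + 1) := by omega
    rw [this, Nat.mul_add_mod, Nat.mod_eq_of_lt (by omega)]

/-- Soundness of EA-simulation: a lasso path `s 1, …, s ℓ` of `K_A` with loopback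
index `n` together with a relation `R ⊆ {1,…,ℓ} × S_B` forming a `SIM_EA` yields a
lasso trace of `K_A` that matches every trace of `K_B` pointwise w.r.t. `Pred`;
in particular `⟨K_A, K_B⟩ ⊨ ∃π.∀π\'. □Pred`. -/
theorem simEA_sound {S₁ S₂ α : Type} [Fintype S₁] [Fintype S₂] [Fintype α]
    (KA : Kripke S₁ α) (KB : Kripke S₂ α) (Pred : Set α → Set α → Prop)
    (s : ℕ → S₁) (ℓ n : ℕ) (hn1 : 1 ≤ n) (hnℓ : n ≤ ℓ)
    (hinit : s 1 ∈ KA.init)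
    (hpath : ∀ i, 1 ≤ i → i < ℓ → KA.delta (s i) (s (i + 1)))
    (hloop : KA.delta (s ℓ) (s n))
    (R : ℕ → S₂ → Prop)
    (hdom : ∀ i sq, R i sq → 1 ≤ i ∧ i ≤ ℓ)
    (h1 : ∀ i sq, R i sq → Pred (KA.L (s i)) (KB.L sq))
    (h2 : ∀ sq ∈ KB.init, R 1 sq)
    (h3 : ∀ i sq sq', R i sq → KB.delta sq sq' → R (if i < ℓ then i + 1 else n) sq') :
    (∀ t' ∈ KB.Traces, ∀ i,
      Pred (KA.L (s (if i + 1 ≤ ℓ then i + 1 else n + (i + 1 - n) % (ℓ + 1 - n))))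
        (t' i)) ∧
    (∃ t ∈ KA.Traces, ∀ t' ∈ KB.Traces, ∀ i, Pred (t i) (t' i)) := by

  have hℓ1 : 1 ≤ ℓ := le_trans hn1 hnℓ
  set m := ℓ + 1 - n with hm_def
  have hm : 0 < m := by omega
  set idx : ℕ → ℕ := fun i => if i + 1 ≤ ℓ then i + 1 else n + (i + 1 - n) % m
    with hidx
  have hbound : ∀ i, 1 ≤ idx i ∧ idx i ≤ ℓ := by
    intro i
    simp only [hidx]
    split
    · omega
    · have := Nat.mod_lt (i + 1 - n) hm
      omega
  have hstep : ∀ i, idx (i + 1) = if idx i < ℓ then idx i + 1 else n := by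
    intro i
    simp only [hidx]
    by_cases ha : i + 1 + 1 ≤ ℓ
    · rw [if_pos ha, if_pos (show i + 1 ≤ ℓ by omega),
        if_pos (show i + 1 < ℓ by omega)]
    · rw [if_neg ha]
      by_cases hb : i + 1 ≤ ℓ
      · have heq : i + 1 = ℓ := by omega
        rw [if_pos hb, if_neg (by omega)]
        have : i + 1 + 1 - n = m := by omega
        rw [this, Nat.mod_self]; omega
      · rw [if_neg hb]
        have hr := Nat.mod_lt (i + 1 - n) hm
        have he : i + 1 + 1 - n = (i + 1 - n) + 1 := by omega
        rw [he, succ_mod_aux _ _ hm]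
        by_cases hc : (i + 1 - n) % m + 1 = m
        · rw [if_pos hc, if_neg (by omega)]; omega
        · rw [if_neg hc, if_pos (by omega)]; omega
  have hidx0 : idx 0 = 1 := by simp only [hidx]; rw [if_pos (by omega)]
  have hAp : KA.IsPath (fun i => s (idx i)) := by
    constructor
    · simpa [hidx0] using hinit
    · intro i
      simp only
      rw [hstep i]
      by_cases h : idx i < ℓ
      · rw [if_pos h]
        exact hpath _ (hbound i).1 h
      · rw [if_neg h]
        have : idx i = ℓ := by have := (hbound i).2; omega
        rw [this]
        exact hloop
  have hR : ∀ p', KB.IsPath p' → ∀ i, R (idx i) (p' i) := by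
    intro p' hp' i
    induction i with
    | zero => rw [hidx0]; exact h2 _ hp'.1
    | succ k ih =>
      rw [hstep k]
      exact h3 _ _ _ ih (hp'.2 k)
  have main : ∀ t' ∈ KB.Traces, ∀ i, Pred (KA.L (s (idx i))) (t' i) := by
    rintro t' ⟨p', hp', ht'⟩ i
    rw [ht' i]
    exact h1 _ _ (hR p' hp' i)
  exact ⟨main, ⟨fun i => KA.L (s (idx i)),
    ⟨fun i => s (idx i), hAp, fun i => rfl⟩, main⟩⟩
end
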